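/- arXiv:2103.10806 — 7 statements merged into one kernel-verified Lean document; each statement's English description precedes it below -/
import Mathlib

section
/- Let T be a tree with n ≥ 4 vertices and l ≥ 3 leaves. Then tr(T) ≥ 6·⌊(n−1)/l⌋ + 2·min{(n−1) mod l, 3}. -/
open SimpleGraph Finset

set_option linter.unusedSectionVars false
namespace TriameterAux

open scoped Classical

variable {V : Type*} [Fintype V] {T : SimpleGraph V}

/-- Neighbors of `v` inside the vertex set `S`. -/
noncomputable def nbrS (T : SimpleGraph V) (S : Finset V) (v : V) : Finset V :=
  S.filter (fun u => T.Adj v u)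

/-- Degree of `v` inside `S`. -/
noncomputable def degS (T : SimpleGraph V) (S : Finset V) (v : V) : ℕ := (nbrS T S v).card

/-- `S` induces a subtree: nonempty and closed under paths between its members. -/
def good (T : SimpleGraph V) (S : Finset V) : Prop :=
  S.Nonempty ∧ ∀ x ∈ S, ∀ y ∈ S, ∀ p : T.Walk x y, p.IsPath → ∀ z ∈ p.support, z ∈ S

noncomputable def leavesS (T : SimpleGraph V) (S : Finset V) : Finset V :=
  S.filter (fun v => degS T S v = 1)

noncomputable def branchS (T : SimpleGraph V) (S : Finset V) : Finset V :=
  S.filter (fun v => 3 ≤ degS T S v)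

lemma mem_nbrS {S : Finset V} {v u : V} : u ∈ nbrS T S v ↔ u ∈ S ∧ T.Adj v u := by
  simp [nbrS]

lemma mem_leavesS {S : Finset V} {v : V} : v ∈ leavesS T S ↔ v ∈ S ∧ degS T S v = 1 := by
  simp [leavesS]

lemma mem_branchS {S : Finset V} {v : V} : v ∈ branchS T S ↔ v ∈ S ∧ 3 ≤ degS T S v := by
  simp [branchS]

lemma leavesS_subset {S : Finset V} : leavesS T S ⊆ S := filter_subset _ _

lemma branchS_subset {S : Finset V} : branchS T S ⊆ S := filter_subset _ _

/-- In a tree, any path realizes the distance. -/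
lemma tree_path_length (hT : T.IsTree) {x y : V} (p : T.Walk x y) (hp : p.IsPath) :
    p.length = T.dist x y := by
  obtain ⟨w, hw⟩ := (hT.isConnected x y).exists_walk_length_eq_dist
  have hb : w.bypass.IsPath := w.bypass_isPath
  have hlen : w.bypass.length = T.dist x y :=
    le_antisymm (le_trans w.length_bypass_le hw.le) (T.dist_le _)
  have heq : (⟨p, hp⟩ : T.Path x y) = ⟨w.bypass, hb⟩ := hT.IsAcyclic.path_unique _ _
  have := congrArg (fun q : T.Path x y => q.1.length) heq
  simpa [hlen] using this

lemma exists_path (hT : T.IsTree) (x y : V) :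
    ∃ p : T.Walk x y, p.IsPath ∧ p.length = T.dist x y := by
  obtain ⟨w, hw⟩ := (hT.isConnected x y).exists_walk_length_eq_dist
  exact ⟨w.bypass, w.bypass_isPath, tree_path_length hT _ w.bypass_isPath⟩

lemma dist_add_of_mem_support (hT : T.IsTree) {x y z : V} (p : T.Walk x y) (hp : p.IsPath)
    (hz : z ∈ p.support) : T.dist x z + T.dist z y = T.dist x y := by
  have h1 := hp.takeUntil hz
  have h2 := hp.dropUntil hz
  have h3 := congrArg Walk.length (p.take_spec hz)
  rw [Walk.length_append] at h3
  rw [← tree_path_length hT p hp, ← tree_path_length hT _ h1, ← tree_path_length hT _ h2]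
  exact h3

/-- Predecessor of `z` (towards `x`) on a path from `x` to `y`. -/
lemma exists_pred (hT : T.IsTree) {x y z : V} (p : T.Walk x y) (hp : p.IsPath)
    (hz : z ∈ p.support) (hzx : z ≠ x) :
    ∃ w, T.Adj z w ∧ w ∈ p.support ∧ T.dist x w + 1 = T.dist x z ∧
      T.dist w y = T.dist z y + 1 := by
  set q := p.takeUntil z hz with hqdef
  have hq : q.IsPath := hp.takeUntil hz
  have hqr : q.reverse.IsPath := hq.reverse
  obtain ⟨w, hadj, r, hr⟩ := q.reverse.exists_eq_cons_of_ne hzx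
  have hrp : r.IsPath := by
    have := hr ▸ hqr
    exact ((Walk.cons_isPath_iff _ _).1 this).1
  have hwq : w ∈ q.support := by
    have : w ∈ q.reverse.support := by
      rw [hr, Walk.support_cons]
      exact List.mem_cons_of_mem _ r.start_mem_support
    rwa [Walk.support_reverse, List.mem_reverse] at this
  have hwp : w ∈ p.support := p.support_takeUntil_subset hz hwq
  have hlen : r.length + 1 = T.dist x z := by
    have h1 : q.length = T.dist x z := tree_path_length hT q hq
    have h2 : q.reverse.length = q.length := q.length_reverse
    have h3 : q.reverse.length = r.length + 1 := by rw [hr]; simp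
    omega
  have hdw : T.dist x w + 1 = T.dist x z := by
    have : r.length = T.dist w x := tree_path_length hT r hrp
    have hc : T.dist x w = T.dist w x := SimpleGraph.dist_comm
    omega
  have hsum1 := dist_add_of_mem_support hT p hp hwp
  have hsum2 := dist_add_of_mem_support hT p hp hz
  exact ⟨w, hadj, hwp, hdw, by omega⟩

/-- Successor of `z` (towards `y`) on a path from `x` to `y`. -/
lemma exists_succ (hT : T.IsTree) {x y z : V} (p : T.Walk x y) (hp : p.IsPath)
    (hz : z ∈ p.support) (hzy : z ≠ y) :
    ∃ w, T.Adj z w ∧ w ∈ p.support ∧ T.dist w y + 1 = T.dist z y ∧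
      T.dist x w = T.dist x z + 1 := by
  have hz' : z ∈ p.reverse.support := by rwa [Walk.support_reverse, List.mem_reverse]
  obtain ⟨w, hadj, hwp, h1, h2⟩ := exists_pred hT p.reverse hp.reverse hz' hzy
  rw [Walk.support_reverse, List.mem_reverse] at hwp
  refine ⟨w, hadj, hwp, ?_, ?_⟩
  · have c1 : T.dist w y = T.dist y w := SimpleGraph.dist_comm
    have c2 : T.dist z y = T.dist y z := SimpleGraph.dist_comm
    omega
  · have c1 : T.dist x w = T.dist w x := SimpleGraph.dist_comm
    have c2 : T.dist x z = T.dist z x := SimpleGraph.dist_comm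
    omega



/-- An interior vertex of a path inside `S` has at least two neighbors in `S`. -/
lemma internal_two (hT : T.IsTree) {S : Finset V} (hS : good T S) {x y z : V}
    (hx : x ∈ S) (hy : y ∈ S) (p : T.Walk x y) (hp : p.IsPath)
    (hz : z ∈ p.support) (hzx : z ≠ x) (hzy : z ≠ y) : 2 ≤ degS T S z := by
  obtain ⟨w1, ha1, hm1, hd1, _⟩ := exists_pred hT p hp hz hzx
  obtain ⟨w2, ha2, hm2, _, hd2⟩ := exists_succ hT p hp hz hzy
  have hw1S : w1 ∈ S := hS.2 x hx y hy p hp w1 hm1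
  have hw2S : w2 ∈ S := hS.2 x hx y hy p hp w2 hm2
  have hne : w1 ≠ w2 := by intro h; rw [h] at hd1; omega
  have hsub : ({w1, w2} : Finset V) ⊆ nbrS T S z := by
    intro t ht
    rcases Finset.mem_insert.1 ht with rfl | ht
    · exact mem_nbrS.2 ⟨hw1S, ha1⟩
    · rw [Finset.mem_singleton] at ht; subst ht; exact mem_nbrS.2 ⟨hw2S, ha2⟩
  calc 2 = ({w1, w2} : Finset V).card := (Finset.card_pair hne).symm
    _ ≤ _ := Finset.card_le_card hsub

/-- A leaf has a unique neighbor in `S`. -/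
lemma leaf_nbr {S : Finset V} {u : V} (hu : u ∈ leavesS T S) : ∃ w, nbrS T S u = {w} := by
  have := (mem_leavesS.1 hu).2
  exact Finset.card_eq_one.1 this

lemma leaf_dist (hT : T.IsTree) {S : Finset V} (hS : good T S) {u w x : V}
    (hu : u ∈ S) (hnb : nbrS T S u = {w}) (hx : x ∈ S) (hxu : x ≠ u) :
    T.dist u x = T.dist w x + 1 := by
  obtain ⟨p, hp, _⟩ := exists_path hT x u
  have hxum : u ∈ p.support := p.end_mem_support
  obtain ⟨w', ha, hm, hd, _⟩ := exists_pred hT p hp hxum (fun h => hxu h.symm)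
  have hw'S : w' ∈ S := hS.2 x hx u hu p hp w' hm
  have : w' ∈ nbrS T S u := mem_nbrS.2 ⟨hw'S, ha⟩
  rw [hnb, Finset.mem_singleton] at this
  subst this
  have c1 : T.dist u x = T.dist x u := SimpleGraph.dist_comm
  have c2 : T.dist w' x = T.dist x w' := SimpleGraph.dist_comm
  omega

/-- Removing a leaf preserves goodness. -/
lemma good_erase (hT : T.IsTree) {S : Finset V} (hS : good T S) {u : V}
    (hu : u ∈ leavesS T S) (h2 : 2 ≤ S.card) : good T (S.erase u) := by
  constructor
  · rw [← Finset.card_pos, Finset.card_erase_of_mem (leavesS_subset hu)]; omega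
  · intro x hx y hy p hp z hz
    have hxS := Finset.mem_of_mem_erase hx
    have hyS := Finset.mem_of_mem_erase hy
    have hzS : z ∈ S := hS.2 x hxS y hyS p hp z hz
    rw [Finset.mem_erase]
    refine ⟨?_, hzS⟩
    rintro rfl
    have h1 : z ≠ x := fun h => (Finset.mem_erase.1 hx).1 h.symm
    have h2' : z ≠ y := fun h => (Finset.mem_erase.1 hy).1 h.symm
    have := internal_two hT hS hxS hyS p hp hz h1 h2'
    have := (mem_leavesS.1 hu).2
    omega

lemma degS_erase {S : Finset V} {u w : V} (hu : u ∈ S) (hnb : nbrS T S u = {w}) {v : V}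
    (hv : v ∈ S) (hvu : v ≠ u) :
    degS T (S.erase u) v = if v = w then degS T S v - 1 else degS T S v := by
  have hkey : u ∈ nbrS T S v ↔ v = w := by
    constructor
    · intro h
      have : v ∈ nbrS T S u := mem_nbrS.2 ⟨hv, (mem_nbrS.1 h).2.symm⟩
      rw [hnb, Finset.mem_singleton] at this; exact this
    · rintro rfl
      have hw' : v ∈ nbrS T S u := by rw [hnb]; exact Finset.mem_singleton_self v
      exact mem_nbrS.2 ⟨hu, (mem_nbrS.1 hw').2.symm⟩
  have hset : nbrS T (S.erase u) v = (nbrS T S v).erase u := by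
    ext t
    simp only [mem_nbrS, Finset.mem_erase, nbrS, Finset.mem_filter]
    tauto
  unfold degS
  rw [hset]
  split_ifs with h
  · rw [Finset.card_erase_of_mem (hkey.2 h)]
  · rw [Finset.erase_eq_of_notMem (fun hc => h (hkey.1 hc))]

/-- Leaves after removing a leaf `u` whose unique neighbor `w` has degree >= 2. -/
lemma leaves_erase {S : Finset V} {u w : V} (hu : u ∈ leavesS T S) (hnb : nbrS T S u = {w})
    (hw2 : 2 ≤ degS T S w) :
    leavesS T (S.erase u) =
      if degS T S w = 2 then insert w ((leavesS T S).erase u) else (leavesS T S).erase u := by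
  have huS : u ∈ S := leavesS_subset hu
  have hwmem : w ∈ nbrS T S u := by rw [hnb]; exact Finset.mem_singleton_self w
  have hwS : w ∈ S := (mem_nbrS.1 hwmem).1
  have hadj : T.Adj u w := (mem_nbrS.1 hwmem).2
  have hwu : w ≠ u := fun h => T.irrefl (h ▸ hadj)
  ext v
  by_cases hvu : v = u
  · subst hvu
    have hL : v ∉ leavesS T (S.erase v) := fun h => (Finset.mem_erase.1 (leavesS_subset h)).1 rfl
    have hR : v ∉ (if degS T S w = 2 then insert w ((leavesS T S).erase v)
        else (leavesS T S).erase v) := by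
      split_ifs
      · intro h
        rcases Finset.mem_insert.1 h with h' | h'
        · exact hwu h'.symm
        · exact (Finset.mem_erase.1 h').1 rfl
      · intro h; exact (Finset.mem_erase.1 h).1 rfl
    exact iff_of_false hL hR
  · by_cases hvS : v ∈ S
    · have hv' : v ∈ S.erase u := Finset.mem_erase.2 ⟨hvu, hvS⟩
      have hdeg := degS_erase huS hnb hvS hvu
      have hLiff : v ∈ leavesS T (S.erase u) ↔ degS T (S.erase u) v = 1 := by
        rw [mem_leavesS]; exact ⟨fun h => h.2, fun h => ⟨hv', h⟩⟩
      by_cases hvw : v = w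
      · subst hvw
        rw [if_pos rfl] at hdeg
        rw [hLiff, hdeg]
        split_ifs with h
        · constructor
          · intro _; exact Finset.mem_insert_self _ _
          · intro _; omega
        · constructor
          · intro hc; omega
          · intro hc
            have := (mem_leavesS.1 (Finset.mem_erase.1 hc).2).2
            omega
      · rw [if_neg hvw] at hdeg
        rw [hLiff, hdeg]
        split_ifs with h
        · constructor
          · intro hd
            exact Finset.mem_insert.2 (Or.inr (Finset.mem_erase.2 ⟨hvu, mem_leavesS.2 ⟨hvS, hd⟩⟩))
          · intro hc
            rcases Finset.mem_insert.1 hc with h' | h'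
            · exact absurd h' hvw
            · exact (mem_leavesS.1 (Finset.mem_erase.1 h').2).2
        · constructor
          · intro hd
            exact Finset.mem_erase.2 ⟨hvu, mem_leavesS.2 ⟨hvS, hd⟩⟩
          · intro hc
            exact (mem_leavesS.1 (Finset.mem_erase.1 hc).2).2
    · have hL : v ∉ leavesS T (S.erase u) :=
        fun h => hvS (Finset.mem_of_mem_erase (leavesS_subset h))
      have hR : v ∉ (if degS T S w = 2 then insert w ((leavesS T S).erase u)
          else (leavesS T S).erase u) := by
        split_ifs
        · intro h
          rcases Finset.mem_insert.1 h with h' | h'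
          · exact hvS (h' ▸ hwS)
          · exact hvS (leavesS_subset (Finset.mem_of_mem_erase h'))
        · intro h; exact hvS (leavesS_subset (Finset.mem_of_mem_erase h))
      exact iff_of_false hL hR

/-- An endpoint of a distance-maximal pair in `S` is a leaf. -/
lemma max_is_leaf (hT : T.IsTree) {S : Finset V} (hS : good T S) {a b : V}
    (ha : a ∈ S) (hb : b ∈ S) (hmax : ∀ x ∈ S, ∀ y ∈ S, T.dist x y ≤ T.dist a b)
    (hpos : 1 ≤ T.dist a b) : degS T S a = 1 := by
  have hab : a ≠ b := by rintro rfl; rw [T.dist_self] at hpos; omega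
  -- degree ≥ 1
  obtain ⟨p, hp, hplen⟩ := exists_path hT a b
  obtain ⟨w0, ha0, hm0, _, _⟩ := exists_succ hT p hp p.start_mem_support hab
  have hw0S : w0 ∈ S := hS.2 a ha b hb p hp w0 hm0
  have hdeg1 : 1 ≤ degS T S a := by
    have : w0 ∈ nbrS T S a := mem_nbrS.2 ⟨hw0S, ha0⟩
    exact Finset.card_pos.2 ⟨w0, this⟩
  -- degree ≤ 1
  by_contra hcon
  have h2 : 2 ≤ degS T S a := by unfold degS at *; omega
  obtain ⟨c1, hc1, c2, hc2, hcc⟩ := Finset.one_lt_card.1 h2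
  -- for each neighbor c, we get a path from a to b starting with c
  have key : ∀ c, c ∈ nbrS T S a → ∃ (pc : T.Walk c b), pc.IsPath ∧ a ∉ pc.support := by
    intro c hc
    obtain ⟨hcS, hadj⟩ := mem_nbrS.1 hc
    obtain ⟨pc, hpc, hpclen⟩ := exists_path hT c b
    refine ⟨pc, hpc, ?_⟩
    intro hmem
    have h3 := dist_add_of_mem_support hT pc hpc hmem
    have hca : T.dist c a = 1 := by
      rw [SimpleGraph.dist_eq_one_iff_adj]; exact hadj.symm
    have hle : T.dist c b ≤ T.dist a b := hmax c hcS b hb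
    omega
  obtain ⟨p1, hp1, hna1⟩ := key c1 hc1
  obtain ⟨p2, hp2, hna2⟩ := key c2 hc2
  have hP1 : (Walk.cons (mem_nbrS.1 hc1).2 p1).IsPath := (Walk.cons_isPath_iff _ _).2 ⟨hp1, hna1⟩
  have hP2 : (Walk.cons (mem_nbrS.1 hc2).2 p2).IsPath := (Walk.cons_isPath_iff _ _).2 ⟨hp2, hna2⟩
  have heq : (⟨Walk.cons (mem_nbrS.1 hc1).2 p1, hP1⟩ : T.Path a b) =
      ⟨Walk.cons (mem_nbrS.1 hc2).2 p2, hP2⟩ := hT.IsAcyclic.path_unique _ _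
  have hsup := congrArg (fun q : T.Path a b => q.1.support) heq
  simp only [Walk.support_cons] at hsup
  rw [List.cons.injEq] at hsup
  have hsup2 : p1.support = p2.support := hsup.2
  have e1 : p1.support = c1 :: p1.support.tail := p1.support_eq_cons
  have e2 : p2.support = c2 :: p2.support.tail := p2.support_eq_cons
  rw [e1, e2, List.cons.injEq] at hsup2
  exact hcc hsup2.1

lemma exists_two_leaves (hT : T.IsTree) {S : Finset V} (hS : good T S) (h2 : 2 ≤ S.card) :
    ∃ a b, a ∈ leavesS T S ∧ b ∈ leavesS T S ∧ a ≠ b ∧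
      ∀ x ∈ S, ∀ y ∈ S, T.dist x y ≤ T.dist a b := by
  obtain ⟨pr, hpr, hmax⟩ := Finset.exists_max_image (S ×ˢ S) (fun pr => T.dist pr.1 pr.2)
    (Finset.Nonempty.product hS.1 hS.1)
  obtain ⟨ha, hb⟩ := Finset.mem_product.1 hpr
  set a := pr.1; set b := pr.2
  have hmax' : ∀ x ∈ S, ∀ y ∈ S, T.dist x y ≤ T.dist a b := by
    intro x hx y hy
    exact hmax (x, y) (Finset.mem_product.2 ⟨hx, hy⟩)
  have hpos : 1 ≤ T.dist a b := by
    obtain ⟨x, hx, y, hy, hxy⟩ := Finset.one_lt_card.1 h2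
    have := hT.isConnected.pos_dist_of_ne hxy
    have := hmax' x hx y hy
    omega
  have hla : degS T S a = 1 := max_is_leaf hT hS ha hb hmax' hpos
  have hlb : degS T S b = 1 := by
    apply max_is_leaf hT hS hb ha
    · intro x hx y hy
      have c1 : T.dist x y = T.dist y x := SimpleGraph.dist_comm
      have c2 : T.dist b a = T.dist a b := SimpleGraph.dist_comm
      rw [c1, c2]; exact hmax' y hy x hx
    · have c2 : T.dist b a = T.dist a b := SimpleGraph.dist_comm
      omega
  have hab : a ≠ b := by rintro h; rw [h, T.dist_self] at hpos; omega
  exact ⟨a, b, mem_leavesS.2 ⟨ha, hla⟩, mem_leavesS.2 ⟨hb, hlb⟩, hab, hmax'⟩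

lemma no_adj_leaves (hT : T.IsTree) {S : Finset V} (hS : good T S) (h3 : 3 ≤ S.card)
    {u w : V} (hu : u ∈ leavesS T S) (hw : w ∈ leavesS T S) (hadj : T.Adj u w) : False := by
  have huS := leavesS_subset (T := T) hu
  have hwS := leavesS_subset (T := T) hw
  have hnb : nbrS T S u = {w} := by
    obtain ⟨w', hw'⟩ := leaf_nbr hu
    have : w ∈ nbrS T S u := mem_nbrS.2 ⟨hwS, hadj⟩
    rw [hw', Finset.mem_singleton] at this
    rw [hw', this]
  -- find a third vertex
  have hcard : 1 ≤ (S \ {u, w}).card := by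
    have := Finset.le_card_sdiff ({u, w} : Finset V) S
    have hc2 : ({u, w} : Finset V).card ≤ 2 := Finset.card_insert_le _ _ |>.trans (by simp)
    omega
  obtain ⟨c, hc⟩ := Finset.card_pos.1 hcard
  obtain ⟨hcS, hcnot⟩ := Finset.mem_sdiff.1 hc
  have hcu : c ≠ u := fun h => hcnot (by simp [h])
  have hcw : c ≠ w := fun h => hcnot (by simp [h])
  obtain ⟨p, hp, _⟩ := exists_path hT c u
  obtain ⟨w', ha', hm', _, _⟩ := exists_pred hT p hp p.end_mem_support (fun h => hcu h.symm)
  have hw'S : w' ∈ S := hS.2 c hcS u huS p hp w' hm'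
  have : w' ∈ nbrS T S u := mem_nbrS.2 ⟨hw'S, ha'⟩
  rw [hnb, Finset.mem_singleton] at this
  have hdegw : degS T S w' = 1 := by rw [this]; exact (mem_leavesS.1 hw).2
  have hwc : w' ≠ c := by rw [this]; exact fun h => hcw h.symm
  have hwu2 : w' ≠ u := fun h => T.irrefl (h ▸ ha')
  have h2' := internal_two hT hS hcS huS p hp hm' hwc hwu2
  omega

end TriameterAux

namespace TriameterAux2
open TriameterAux
open scoped Classical
variable {V : Type*} [Fintype V] {T : SimpleGraph V}

/-- A good set with at least 3 vertices has a non-leaf vertex. -/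
lemma leaves_card_lt (hT : T.IsTree) {S : Finset V} (hS : good T S) (h3 : 3 ≤ S.card) :
    (leavesS T S).card < S.card := by
  obtain ⟨a, b, ha, hb, hab, hmax⟩ := exists_two_leaves hT hS (by omega)
  have haS := leavesS_subset (T := T) ha
  have hbS := leavesS_subset (T := T) hb
  have hpos : 1 ≤ T.dist a b := hT.isConnected.pos_dist_of_ne hab
  by_cases h1 : T.dist a b = 1
  · exact absurd (SimpleGraph.dist_eq_one_iff_adj.1 h1) (fun hadj =>
      no_adj_leaves hT hS h3 ha hb hadj)
  · obtain ⟨p, hp, hplen⟩ := exists_path hT a b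
    obtain ⟨w, hadj, hm, hd1, hd2⟩ := exists_succ hT p hp p.start_mem_support hab
    have hwS : w ∈ S := hS.2 a haS b hbS p hp w hm
    have hwa : w ≠ a := fun h => T.irrefl (h ▸ hadj)
    have hwb : w ≠ b := by
      intro h; subst h
      rw [T.dist_self] at hd1
      omega
    have hdeg := internal_two hT hS haS hbS p hp hm hwa hwb
    apply Finset.card_lt_card
    constructor
    · exact leavesS_subset
    · intro hsub
      have := (mem_leavesS.1 (hsub hwS)).2
      omega

/-- Handshake: sum of degrees inside a good set. -/
lemma handshake (hT : T.IsTree) : ∀ n : ℕ, ∀ S : Finset V, S.card = n → good T S →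
    ∑ v ∈ S, degS T S v = 2 * (S.card - 1) := by
  intro n
  induction n using Nat.strong_induction_on with
  | _ n IH =>
  intro S hcard hS
  rcases Nat.lt_or_ge n 2 with h2 | h2
  · -- n = 1 (S nonempty)
    obtain ⟨x, hx⟩ := hS.1
    have hn1 : n = 1 := by
      have := Finset.card_pos.2 ⟨x, hx⟩
      omega
    have hSx : S = {x} := by
      apply Finset.eq_singleton_iff_unique_mem.2
      refine ⟨hx, fun y hy => ?_⟩
      by_contra hne
      have : 2 ≤ S.card := Finset.one_lt_card.2 ⟨y, hy, x, hx, hne⟩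
      omega
    subst hSx
    rw [Finset.sum_singleton]
    have : nbrS T {x} x = ∅ := by
      ext t
      simp only [mem_nbrS, Finset.mem_singleton, Finset.notMem_empty, iff_false]
      rintro ⟨rfl, hadj⟩
      exact T.irrefl hadj
    simp [degS, this]
  · obtain ⟨u, b0, hu, hb0, hub, _⟩ := exists_two_leaves hT hS (hcard ▸ h2)
    have huS := leavesS_subset (T := T) hu
    obtain ⟨w, hnb⟩ := leaf_nbr hu
    have hwmem : w ∈ nbrS T S u := by rw [hnb]; exact Finset.mem_singleton_self w
    have hwS : w ∈ S := (mem_nbrS.1 hwmem).1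
    have hwu : w ≠ u := fun h => T.irrefl (h ▸ (mem_nbrS.1 hwmem).2)
    set S' := S.erase u with hS'def
    have hS' : good T S' := good_erase hT hS hu (by omega)
    have hcard' : S'.card = n - 1 := by rw [hS'def, Finset.card_erase_of_mem huS, hcard]
    have hIH := IH (n-1) (by omega) S' hcard' hS'
    have hwS' : w ∈ S' := Finset.mem_erase.2 ⟨hwu, hwS⟩
    -- sum over S of degS = sum over S' of degS + 1
    have hsplit : ∑ v ∈ S, degS T S v = degS T S u + ∑ v ∈ S', degS T S v := by
      rw [hS'def, ← Finset.add_sum_erase _ _ huS]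
    -- relate degS S and degS S' on S'
    have hdeg : ∀ v ∈ S', degS T S' v = if v = w then degS T S v - 1 else degS T S v := by
      intro v hv
      exact degS_erase huS hnb (Finset.mem_of_mem_erase hv) (Finset.mem_erase.1 hv).1
    have hw1 : 1 ≤ degS T S w := Finset.card_pos.2 ⟨u, mem_nbrS.2 ⟨huS, (mem_nbrS.1 hwmem).2.symm⟩⟩
    have hsum' : ∑ v ∈ S', degS T S v = (∑ v ∈ S', degS T S' v) + 1 := by
      rw [← Finset.add_sum_erase _ _ hwS', ← Finset.add_sum_erase _ (fun v => degS T S' v) hwS']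
      have h1 : degS T S' w = degS T S w - 1 := by rw [hdeg w hwS', if_pos rfl]
      have h2 : ∑ v ∈ S'.erase w, degS T S v = ∑ v ∈ S'.erase w, degS T S' v := by
        apply Finset.sum_congr rfl
        intro v hv
        rw [hdeg v (Finset.mem_of_mem_erase hv), if_neg (Finset.mem_erase.1 hv).1]
      omega
    have hdegu : degS T S u = 1 := (mem_leavesS.1 hu).2
    have hcard2 : 2 ≤ S.card := by omega
    rw [hsplit, hsum', hIH, hdegu, hcard', hcard]
    omega

lemma branch_nonempty (hT : T.IsTree) {S : Finset V} (hS : good T S)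
    (hl : 3 ≤ (leavesS T S).card) : (branchS T S).Nonempty := by
  by_contra hcon
  rw [Finset.not_nonempty_iff_eq_empty] at hcon
  have hbound : ∀ v ∈ S, degS T S v ≤ 2 := by
    intro v hv
    by_contra h
    have : v ∈ branchS T S := mem_branchS.2 ⟨hv, by omega⟩
    rw [hcon] at this
    exact absurd this (Finset.notMem_empty v)
  have hcardS : (leavesS T S).card ≤ S.card := Finset.card_le_card leavesS_subset
  have h3S : 3 ≤ S.card := le_trans hl hcardS
  have hsum := handshake hT S.card S rfl hS
  -- split sum over leaves and the rest
  have hsplit : ∑ v ∈ S, degS T S v =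
      ∑ v ∈ leavesS T S, degS T S v + ∑ v ∈ S \ leavesS T S, degS T S v := by
    rw [← Finset.sum_sdiff (leavesS_subset (T := T) (S := S))]; ring
  have h1 : ∑ v ∈ leavesS T S, degS T S v = (leavesS T S).card := by
    rw [Finset.card_eq_sum_ones]
    apply Finset.sum_congr rfl
    intro v hv
    exact (mem_leavesS.1 hv).2
  have h2 : ∑ v ∈ S \ leavesS T S, degS T S v ≤ (S \ leavesS T S).card * 2 := by
    have := Finset.sum_le_card_nsmul (S \ leavesS T S) (fun v => degS T S v) 2
      (fun x hx => hbound x (Finset.mem_sdiff.1 hx).1)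
    simpa using this
  have h3 : (S \ leavesS T S).card = S.card - (leavesS T S).card :=
    Finset.card_sdiff_of_subset (leavesS_subset (T := T) (S := S))
  omega


/-- Distance from `u` to the set of branch vertices. -/
noncomputable def dB (T : SimpleGraph V) (S : Finset V) (u : V) : ℕ :=
  sInf {k : ℕ | ∃ b ∈ branchS T S, T.dist u b = k}

lemma dB_le {S : Finset V} {u b : V} (hb : b ∈ branchS T S) : dB T S u ≤ T.dist u b :=
  Nat.sInf_le ⟨b, hb, rfl⟩

lemma dB_exists {S : Finset V} {u : V} (hne : (branchS T S).Nonempty) :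
    ∃ b ∈ branchS T S, T.dist u b = dB T S u := by
  obtain ⟨b0, hb0⟩ := hne
  exact Nat.sInf_mem (⟨T.dist u b0, b0, hb0, rfl⟩ :
    {k : ℕ | ∃ b ∈ branchS T S, T.dist u b = k}.Nonempty)

lemma dB_pos (hT : T.IsTree) {S : Finset V} {u : V} (hu : u ∈ leavesS T S)
    (hne : (branchS T S).Nonempty) : 1 ≤ dB T S u := by
  obtain ⟨b, hb, hdist⟩ := dB_exists hne
  rcases Nat.eq_zero_or_pos (dB T S u) with h0 | h1
  · rw [h0] at hdist
    have : u = b := (hT.isConnected.dist_eq_zero_iff).1 hdist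
    subst this
    have h1 := (mem_leavesS.1 hu).2
    have h2 := (mem_branchS.1 hb).2
    omega
  · exact h1

/-- Key disjointness: the pendant paths of two distinct leaves towards their
nearest branch vertices are disjoint (away from the branch vertices). -/
lemma disj (hT : T.IsTree) {S : Finset V} (hS : good T S)
    {u u' b b' : V} (hu : u ∈ leavesS T S) (hu' : u' ∈ leavesS T S) (huu' : u ≠ u')
    (hb : b ∈ branchS T S) (hb' : b' ∈ branchS T S)
    (hmin : ∀ c ∈ branchS T S, T.dist u b ≤ T.dist u c)
    (hmin' : ∀ c ∈ branchS T S, T.dist u' b' ≤ T.dist u' c)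
    (p : T.Walk u b) (p' : T.Walk u' b') (hp : p.IsPath) (hp' : p'.IsPath) :
    ∀ k z, T.dist u z = k → z ∈ p.support → z ≠ b → z ∈ p'.support → z ≠ b' → False := by
  have hconn := hT.isConnected
  have huS := leavesS_subset (T := T) hu
  have hu'S := leavesS_subset (T := T) hu'
  have hbS := branchS_subset (T := T) hb
  have hb'S := branchS_subset (T := T) hb'
  have hdegu := (mem_leavesS.1 hu).2
  have hdegu' := (mem_leavesS.1 hu').2
  intro k
  induction k using Nat.strong_induction_on with
  | _ k IH =>
  intro z hk hzp hzb hzp' hzb'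
  have hzS : z ∈ S := hS.2 u huS b hbS p hp z hzp
  have h1 : T.dist u z + T.dist z b = T.dist u b := dist_add_of_mem_support hT p hp hzp
  have h1' : T.dist u' z + T.dist z b' = T.dist u' b' := dist_add_of_mem_support hT p' hp' hzp'
  have hzbpos : 1 ≤ T.dist z b := hconn.pos_dist_of_ne hzb
  have hzb'pos : 1 ≤ T.dist z b' := hconn.pos_dist_of_ne hzb'
  -- z is closest-to-branch along both
  have hA : ∀ c ∈ branchS T S, T.dist z b ≤ T.dist z c := by
    intro c hc
    by_contra hcon
    push_neg at hcon
    have htr : T.dist u c ≤ T.dist u z + T.dist z c := hconn.dist_triangle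
    have := hmin c hc
    omega
  have hA' : ∀ c ∈ branchS T S, T.dist z b' ≤ T.dist z c := by
    intro c hc
    by_contra hcon
    push_neg at hcon
    have htr : T.dist u' c ≤ T.dist u' z + T.dist z c := hconn.dist_triangle
    have := hmin' c hc
    omega
  have hbb' : T.dist z b = T.dist z b' := le_antisymm (hA b' hb') (hA' b hb)
  -- z is not a branch vertex
  have hznb : z ∉ branchS T S := by
    intro hzB
    have := hA z hzB
    rw [T.dist_self] at this
    omega
  have hdegz2 : degS T S z ≤ 2 := by
    by_contra h
    exact hznb (mem_branchS.2 ⟨hzS, by omega⟩)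
  -- z ≠ u, z ≠ u'
  have hzu : z ≠ u := by
    rintro rfl
    have hne1 : z ≠ u' := huu'
    have := internal_two hT hS hu'S hb'S p' hp' hzp' hne1 hzb'
    omega
  have hzu' : z ≠ u' := by
    rintro rfl
    have hne1 : z ≠ u := fun h => huu' h.symm
    have := internal_two hT hS huS hbS p hp hzp hne1 hzb
    omega
  -- predecessors and successors
  obtain ⟨P, haP, hmP, hdP, hdPb⟩ := exists_pred hT p hp hzp hzu
  obtain ⟨Sc, haSc, hmSc, hdScb, hdSc⟩ := exists_succ hT p hp hzp hzb
  obtain ⟨P', haP', hmP', hdP', hdP'b⟩ := exists_pred hT p' hp' hzp' hzu'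
  have hPS : P ∈ S := hS.2 u huS b hbS p hp P hmP
  have hScS : Sc ∈ S := hS.2 u huS b hbS p hp Sc hmSc
  have hP'S : P' ∈ S := hS.2 u' hu'S b' hb'S p' hp' P' hmP'
  have hPSc : P ≠ Sc := by intro h; rw [h] at hdP; omega
  have hsub : ({P, Sc} : Finset V) ⊆ nbrS T S z := by
    intro t ht
    rcases Finset.mem_insert.1 ht with rfl | ht
    · exact mem_nbrS.2 ⟨hPS, haP⟩
    · rw [Finset.mem_singleton] at ht; subst ht; exact mem_nbrS.2 ⟨hScS, haSc⟩
  have hpair : ({P, Sc} : Finset V) = nbrS T S z := by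
    apply Finset.eq_of_subset_of_card_le hsub
    rw [Finset.card_pair hPSc]
    exact hdegz2
  have hP'mem : P' ∈ ({P, Sc} : Finset V) := by
    rw [hpair]; exact mem_nbrS.2 ⟨hP'S, haP'⟩
  rcases Finset.mem_insert.1 hP'mem with hPP' | hP'Sc
  · -- P' = P : recurse
    subst hPP'
    have hP'b : P' ≠ b := by
      intro h; rw [h] at hdP
      omega
    have hP'b' : P' ≠ b' := by
      intro h; rw [h] at hdP'
      omega
    exact IH (T.dist u P') (by omega) P' rfl hmP hP'b hmP' hP'b'
  · -- P' = Sc : distance contradiction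
    rw [Finset.mem_singleton] at hP'Sc
    subst hP'Sc
    have htr : T.dist u' b ≤ T.dist u' P' + T.dist P' b := hconn.dist_triangle
    have hm1 := hmin' b hb
    omega


lemma exists_short_leaf (hT : T.IsTree) {S : Finset V} (hS : good T S)
    (hl3 : 3 ≤ (leavesS T S).card) :
    ∃ u ∈ leavesS T S, dB T S u ≤ (S.card - 1) / (leavesS T S).card := by
  have hBne := branch_nonempty hT hS hl3
  have hconn := hT.isConnected
  have hex : ∀ u, u ∈ leavesS T S → ∃ (b : V) (q : T.Walk u b), b ∈ branchS T S ∧ q.IsPath ∧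
      T.dist u b = dB T S u ∧ ∀ c ∈ branchS T S, T.dist u b ≤ T.dist u c := by
    intro u hu
    obtain ⟨b, hb, hdist⟩ := dB_exists (u := u) hBne
    obtain ⟨q, hq, _⟩ := exists_path hT u b
    refine ⟨b, q, hb, hq, hdist, fun c hc => ?_⟩
    rw [hdist]; exact dB_le hc
  choose bf pf hbf hpf hdf hmf using hex
  set F : V → Finset V := fun u =>
    if h : u ∈ leavesS T S then ((pf u h).support.toFinset.erase (bf u h)) else ∅ with hFdef
  have hFcard : ∀ u (h : u ∈ leavesS T S), (F u).card = dB T S u := by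
    intro u h
    rw [hFdef]
    simp only [dif_pos h]
    rw [Finset.card_erase_of_mem (by
      rw [List.mem_toFinset]; exact (pf u h).end_mem_support)]
    rw [List.card_toFinset, ((hpf u h).support_nodup).dedup, Walk.length_support,
      tree_path_length hT _ (hpf u h), hdf u h]
    omega
  have hFsub : ∀ u (h : u ∈ leavesS T S), F u ⊆ S \ branchS T S := by
    intro u h z hz
    rw [hFdef] at hz
    simp only [dif_pos h, Finset.mem_erase, List.mem_toFinset] at hz
    obtain ⟨hzb, hzsup⟩ := hz
    have hzS : z ∈ S := hS.2 u (leavesS_subset h) (bf u h) (branchS_subset (hbf u h))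
      (pf u h) (hpf u h) z hzsup
    rw [Finset.mem_sdiff]
    refine ⟨hzS, fun hzB => ?_⟩
    have h1 := dist_add_of_mem_support hT (pf u h) (hpf u h) hzsup
    have h2 : 1 ≤ T.dist z (bf u h) := hconn.pos_dist_of_ne hzb
    have h3 := hmf u h z hzB
    omega
  have hdisj : (↑(leavesS T S) : Set V).PairwiseDisjoint F := by
    intro x hx y hy hxy
    simp only [Function.onFun]
    rw [Finset.disjoint_left]
    intro z hzx hzy
    rw [Finset.mem_coe] at hx hy
    rw [hFdef] at hzx hzy
    simp only [dif_pos hx, dif_pos hy, Finset.mem_erase, List.mem_toFinset] at hzx hzy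
    exact disj hT hS hx hy hxy (hbf x hx) (hbf y hy) (hmf x hx) (hmf y hy)
      (pf x hx) (pf y hy) (hpf x hx) (hpf y hy) (T.dist x z) z rfl
      hzx.2 hzx.1 hzy.2 hzy.1
  have hsum : ∑ u ∈ leavesS T S, dB T S u ≤ S.card - 1 := by
    have e1 : ∑ u ∈ leavesS T S, dB T S u = ∑ u ∈ (leavesS T S).attach, (F u.1).card := by
      rw [← Finset.sum_attach (leavesS T S) (fun u => dB T S u)]
      exact Finset.sum_congr rfl (fun x _ => (hFcard x.1 x.2).symm)
    have e2 : ∑ u ∈ leavesS T S, (F u).card = ∑ u ∈ (leavesS T S).attach, (F u.1).card :=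
      (Finset.sum_attach (leavesS T S) (fun u => (F u).card)).symm
    have e3 : ∑ u ∈ leavesS T S, (F u).card = ((leavesS T S).biUnion F).card :=
      (Finset.card_biUnion (fun x hx y hy hxy => hdisj hx hy hxy)).symm
    have e4 : (leavesS T S).biUnion F ⊆ S \ branchS T S := by
      intro z hz
      obtain ⟨u, hu, hzu⟩ := Finset.mem_biUnion.1 hz
      exact hFsub u hu hzu
    have e5 : ((leavesS T S).biUnion F).card ≤ (S \ branchS T S).card :=
      Finset.card_le_card e4
    have e6 : (S \ branchS T S).card = S.card - (branchS T S).card :=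
      Finset.card_sdiff_of_subset (branchS_subset (T := T) (S := S))
    have e7 : 1 ≤ (branchS T S).card := Finset.card_pos.2 hBne
    have e8 : (branchS T S).card ≤ S.card := Finset.card_le_card branchS_subset
    omega
  by_contra hcon
  push_neg at hcon
  set q := (S.card - 1) / (leavesS T S).card with hqdef
  have hlow : ∀ u ∈ leavesS T S, q + 1 ≤ dB T S u := fun u hu => hcon u hu
  have hge : (leavesS T S).card * (q + 1) ≤ ∑ u ∈ leavesS T S, dB T S u := by
    have := Finset.card_nsmul_le_sum (leavesS T S) (fun u => dB T S u) (q+1) hlow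
    simpa using this
  have hl0 : 0 < (leavesS T S).card := by omega
  have hdm : (leavesS T S).card * q + (S.card - 1) % (leavesS T S).card = S.card - 1 :=
    Nat.div_add_mod _ _
  have hmod : (S.card - 1) % (leavesS T S).card < (leavesS T S).card := Nat.mod_lt _ hl0
  have hmul : (leavesS T S).card * (q + 1) = (leavesS T S).card * q + (leavesS T S).card :=
    Nat.mul_succ _ _
  omega

/-- Removing the whole pendant path of a leaf `u` (strictly before the branch vertex). -/
lemma rem (hT : T.IsTree) : ∀ k : ℕ, ∀ S : Finset V, good T S → ∀ u ∈ leavesS T S,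
    (branchS T S).Nonempty → dB T S u = k + 1 →
    ∃ S' : Finset V, S' ⊆ S ∧ good T S' ∧ S'.card + (k + 1) = S.card ∧
      leavesS T S' = (leavesS T S).erase u := by
  intro k
  induction k with
  | zero =>
    intro S hS u hu hBne hdB
    obtain ⟨b, hb, hdist⟩ := dB_exists (u := u) hBne
    rw [hdB] at hdist
    have hadj : T.Adj u b := SimpleGraph.dist_eq_one_iff_adj.1 hdist
    have huS := leavesS_subset (T := T) hu
    have hbS := branchS_subset (T := T) hb
    obtain ⟨w, hnb⟩ := leaf_nbr hu
    have hbw : b = w := by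
      have : b ∈ nbrS T S u := mem_nbrS.2 ⟨hbS, hadj⟩
      rw [hnb, Finset.mem_singleton] at this; exact this
    rw [hbw] at hb hbS hadj
    have hdegw : 3 ≤ degS T S w := (mem_branchS.1 hb).2
    have hcard2 : 2 ≤ S.card := by
      apply Finset.one_lt_card.2
      exact ⟨u, huS, w, hbS, fun h => T.irrefl (h ▸ hadj)⟩
    refine ⟨S.erase u, Finset.erase_subset _ _, good_erase hT hS hu hcard2, ?_, ?_⟩
    · rw [Finset.card_erase_of_mem huS]; omega
    · rw [leaves_erase hu hnb (by omega), if_neg (by omega)]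
  | succ k IHk =>
    intro S hS u hu hBne hdB
    obtain ⟨b, hb, hdist⟩ := dB_exists (u := u) hBne
    rw [hdB] at hdist
    have huS := leavesS_subset (T := T) hu
    have hbS := branchS_subset (T := T) hb
    have hub : u ≠ b := by
      intro h; rw [h, T.dist_self] at hdist; omega
    obtain ⟨p, hp, hplen⟩ := exists_path hT u b
    obtain ⟨w, hadj, hmw, hdwb, hduw⟩ := exists_succ hT p hp p.start_mem_support hub
    have hwS : w ∈ S := hS.2 u huS b hbS p hp w hmw
    have hwu : w ≠ u := fun h => T.irrefl (h ▸ hadj)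
    have hnb : nbrS T S u = {w} := by
      obtain ⟨w', hnb'⟩ := leaf_nbr hu
      have : w ∈ nbrS T S u := mem_nbrS.2 ⟨hwS, hadj⟩
      rw [hnb', Finset.mem_singleton] at this
      rw [hnb', this]
    have hduw1 : T.dist u w = 1 := by rw [T.dist_self] at hduw; omega
    have hdwb' : T.dist w b = k + 1 := by omega
    have hwb : w ≠ b := by
      intro h; rw [h, T.dist_self] at hdwb'; omega
    -- w is not a branch vertex
    have hwnB : w ∉ branchS T S := by
      intro hwB
      have := dB_le (u := u) hwB
      rw [hdB, hduw1] at this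
      omega
    -- degS w = 2
    have hdegw : degS T S w = 2 := by
      have hge := internal_two hT hS huS hbS p hp hmw hwu hwb
      have : ¬ 3 ≤ degS T S w := fun h => hwnB (mem_branchS.2 ⟨hwS, h⟩)
      omega
    have hcard2 : 2 ≤ S.card :=
      Finset.one_lt_card.2 ⟨u, huS, w, hwS, fun h => hwu h.symm⟩
    set S1 := S.erase u with hS1def
    have hS1 : good T S1 := good_erase hT hS hu hcard2
    have hleaves1 : leavesS T S1 = insert w ((leavesS T S).erase u) := by
      rw [hS1def, leaves_erase hu hnb (by omega), if_pos hdegw]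
    -- branch set unchanged
    have hbranch1 : branchS T S1 = branchS T S := by
      ext v
      rw [mem_branchS, mem_branchS]
      constructor
      · rintro ⟨hv1, hv2⟩
        have hvS : v ∈ S := Finset.mem_of_mem_erase hv1
        have hvu : v ≠ u := (Finset.mem_erase.1 hv1).1
        have hd := degS_erase huS hnb hvS hvu
        rw [← hS1def] at hd
        refine ⟨hvS, ?_⟩
        split_ifs at hd with h
        · omega
        · omega
      · rintro ⟨hvS, hv2⟩
        have hdegu : degS T S u = 1 := (mem_leavesS.1 hu).2
        have hvu : v ≠ u := by rintro rfl; omega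
        have hvw : v ≠ w := by rintro rfl; omega
        have hd := degS_erase huS hnb hvS hvu
        rw [← hS1def] at hd
        rw [if_neg hvw] at hd
        exact ⟨Finset.mem_erase.2 ⟨hvu, hvS⟩, by omega⟩
    have hBne1 : (branchS T S1).Nonempty := by rw [hbranch1]; exact hBne
    have hwleaf1 : w ∈ leavesS T S1 := by
      rw [hleaves1]; exact Finset.mem_insert_self _ _
    -- dB S1 w = k + 1
    have hdB1 : dB T S1 w = k + 1 := by
      apply le_antisymm
      · have := dB_le (u := w) (hbranch1 ▸ hb)
        rw [hdwb'] at this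
        omega
      · obtain ⟨c, hc, hcd⟩ := dB_exists (u := w) hBne1
        rw [hbranch1] at hc
        have h1 : T.dist u c ≤ T.dist u w + T.dist w c := hT.isConnected.dist_triangle
        have h2 := dB_le (u := u) hc
        rw [hdB] at h2
        rw [← hcd, hduw1] at *
        omega
    obtain ⟨S', hsub', hgood', hcard', hleaves'⟩ := IHk S1 hS1 w hwleaf1 hBne1 hdB1
    refine ⟨S', fun x hx => Finset.mem_of_mem_erase (hsub' hx), hgood', ?_, ?_⟩
    · have : S1.card = S.card - 1 := by rw [hS1def, Finset.card_erase_of_mem huS]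
      omega
    · rw [hleaves', hleaves1]
      have hwnl : w ∉ (leavesS T S).erase u := by
        intro h
        have := (mem_leavesS.1 (Finset.mem_of_mem_erase h)).2
        omega
      exact Finset.erase_insert hwnl


/-- A good set with exactly two leaves is a path. -/
lemma two_leaves_path (hT : T.IsTree) : ∀ n : ℕ, ∀ S : Finset V, S.card = n → good T S →
    (leavesS T S).card = 2 → ∀ a ∈ leavesS T S, ∀ b ∈ leavesS T S, a ≠ b →
    T.dist a b + 1 = S.card ∧ ∀ z ∈ S, T.dist a z + T.dist z b = T.dist a b := by
  intro n
  induction n using Nat.strong_induction_on with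
  | _ n IH =>
  intro S hcard hS hl2 a ha b hb hab
  have haS := leavesS_subset (T := T) ha
  have hbS := leavesS_subset (T := T) hb
  have hleq : ({a, b} : Finset V) = leavesS T S := by
    apply Finset.eq_of_subset_of_card_le
    · intro t ht
      rcases Finset.mem_insert.1 ht with rfl | ht
      · exact ha
      · rw [Finset.mem_singleton] at ht; subst ht; exact hb
    · rw [Finset.card_pair hab]; omega
  have hcard2 : 2 ≤ S.card := Finset.one_lt_card.2 ⟨a, haS, b, hbS, hab⟩
  obtain ⟨w, hnb⟩ := leaf_nbr ha
  have hwmem : w ∈ nbrS T S a := by rw [hnb]; exact Finset.mem_singleton_self w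
  have hwS : w ∈ S := (mem_nbrS.1 hwmem).1
  have hadj : T.Adj a w := (mem_nbrS.1 hwmem).2
  have hwa : w ≠ a := fun h => T.irrefl (h ▸ hadj)
  rcases Nat.lt_or_ge S.card 3 with h3 | h3
  · -- S = {a, b}
    have hSeq : ({a, b} : Finset V) = S := by
      apply Finset.eq_of_subset_of_card_le
      · intro t ht
        rcases Finset.mem_insert.1 ht with rfl | ht
        · exact haS
        · rw [Finset.mem_singleton] at ht; subst ht; exact hbS
      · rw [Finset.card_pair hab]; omega
    have hwb : w = b := by
      have : w ∈ ({a, b} : Finset V) := hSeq ▸ hwS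
      rcases Finset.mem_insert.1 this with h | h
      · exact absurd h hwa
      · rwa [Finset.mem_singleton] at h
    have hd1 : T.dist a b = 1 := SimpleGraph.dist_eq_one_iff_adj.2 (hwb ▸ hadj)
    have hcS2 : S.card = 2 := by rw [← hSeq, Finset.card_pair hab]
    constructor
    · omega
    · intro z hz
      have : z ∈ ({a, b} : Finset V) := hSeq ▸ hz
      rcases Finset.mem_insert.1 this with rfl | h
      · rw [T.dist_self]; omega
      · rw [Finset.mem_singleton] at h; subst h
        rw [T.dist_self]; omega
  · -- S.card ≥ 3
    have hwb : w ≠ b := by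
      rintro rfl
      exact no_adj_leaves hT hS h3 ha hb hadj
    have hwnl : degS T S w ≠ 1 := by
      intro h1
      have : w ∈ leavesS T S := mem_leavesS.2 ⟨hwS, h1⟩
      rw [← hleq] at this
      rcases Finset.mem_insert.1 this with h | h
      · exact hwa h
      · rw [Finset.mem_singleton] at h; exact hwb h
    have hw1 : 1 ≤ degS T S w :=
      Finset.card_pos.2 ⟨a, mem_nbrS.2 ⟨haS, hadj.symm⟩⟩
    set S1 := S.erase a with hS1def
    have hS1 : good T S1 := good_erase hT hS ha hcard2
    have hcard1 : S1.card = n - 1 := by rw [hS1def, Finset.card_erase_of_mem haS, hcard]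
    have hleaves1 := leaves_erase ha hnb (by omega)
    rw [← hS1def] at hleaves1
    have herase : (leavesS T S).erase a = {b} := by
      rw [← hleq, Finset.erase_insert (by simp [hab])]
    by_cases hdw : degS T S w = 2
    · rw [if_pos hdw, herase] at hleaves1
      have hl1 : (leavesS T S1).card = 2 := by
        rw [hleaves1, Finset.card_insert_of_notMem (by simp [hwb]), Finset.card_singleton]
      have hwmem1 : w ∈ leavesS T S1 := by rw [hleaves1]; exact Finset.mem_insert_self _ _
      have hbmem1 : b ∈ leavesS T S1 := by
        rw [hleaves1]; exact Finset.mem_insert.2 (Or.inr (Finset.mem_singleton_self b))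
      obtain ⟨hIH1, hIH2⟩ := IH (n-1) (by omega) S1 hcard1 hS1 hl1 w hwmem1 b hbmem1 hwb
      have hldist : ∀ x ∈ S, x ≠ a → T.dist a x = T.dist w x + 1 :=
        fun x hx hxa => leaf_dist hT hS haS hnb hx hxa
      have hdab : T.dist a b = T.dist w b + 1 := hldist b hbS (fun h => hab h.symm)
      constructor
      · omega
      · intro z hz
        by_cases hza : z = a
        · subst hza; rw [T.dist_self]; omega
        · have hz1 : z ∈ S1 := Finset.mem_erase.2 ⟨hza, hz⟩
          have := hIH2 z hz1
          have := hldist z hz hza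
          omega
    · -- degS w ≥ 3 : contradiction, S1 would have only one leaf
      rw [if_neg hdw, herase] at hleaves1
      obtain ⟨x, y, hx1, hy1, hxy, _⟩ := exists_two_leaves hT hS1 (by omega)
      rw [hleaves1, Finset.mem_singleton] at hx1 hy1
      exact absurd (hx1.trans hy1.symm) hxy

/-- A good set with exactly three leaves: the three leaves realize twice the size. -/
lemma three_leaves (hT : T.IsTree) : ∀ n : ℕ, ∀ S : Finset V, S.card = n → good T S →
    (leavesS T S).card = 3 →
    ∃ a b c, a ∈ leavesS T S ∧ b ∈ leavesS T S ∧ c ∈ leavesS T S ∧ a ≠ b ∧ a ≠ c ∧ b ≠ c ∧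
      2 * (S.card - 1) ≤ T.dist a b + T.dist a c + T.dist b c := by
  intro n
  induction n using Nat.strong_induction_on with
  | _ n IH =>
  intro S hcard hS hl3
  have h3S : 3 ≤ S.card := by
    have := Finset.card_le_card (leavesS_subset (T := T) (S := S))
    omega
  obtain ⟨u, hu⟩ := Finset.card_pos.1 (show 0 < (leavesS T S).card by omega)
  have huS := leavesS_subset (T := T) hu
  obtain ⟨w, hnb⟩ := leaf_nbr hu
  have hwmem : w ∈ nbrS T S u := by rw [hnb]; exact Finset.mem_singleton_self w
  have hwS : w ∈ S := (mem_nbrS.1 hwmem).1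
  have hadj : T.Adj u w := (mem_nbrS.1 hwmem).2
  have hwu : w ≠ u := fun h => T.irrefl (h ▸ hadj)
  have hw2 : 2 ≤ degS T S w := by
    have hw1 : 1 ≤ degS T S w := Finset.card_pos.2 ⟨u, mem_nbrS.2 ⟨huS, hadj.symm⟩⟩
    rcases Nat.lt_or_ge (degS T S w) 2 with h | h
    · have hwl : w ∈ leavesS T S := mem_leavesS.2 ⟨hwS, by omega⟩
      exact absurd (no_adj_leaves hT hS h3S hu hwl hadj) not_false
    · exact h
  set S1 := S.erase u with hS1def
  have hS1 : good T S1 := good_erase hT hS hu (by omega)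
  have hcard1 : S1.card = n - 1 := by rw [hS1def, Finset.card_erase_of_mem huS, hcard]
  have hleaves1 := leaves_erase hu hnb hw2
  rw [← hS1def] at hleaves1
  have hldist : ∀ x ∈ S, x ≠ u → T.dist u x = T.dist w x + 1 :=
    fun x hx hxa => leaf_dist hT hS huS hnb hx hxa
  have herase_card : ((leavesS T S).erase u).card = 2 := by
    rw [Finset.card_erase_of_mem hu, hl3]
  by_cases hdw : degS T S w = 2
  · rw [if_pos hdw] at hleaves1
    have hwnot : w ∉ (leavesS T S).erase u := by
      intro h
      have := (mem_leavesS.1 (Finset.mem_of_mem_erase h)).2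
      omega
    have hl1 : (leavesS T S1).card = 3 := by
      rw [hleaves1, Finset.card_insert_of_notMem hwnot, herase_card]
    obtain ⟨a, b, c, ha1, hb1, hc1, hab, hac, hbc, hsum⟩ :=
      IH (n-1) (by omega) S1 hcard1 hS1 hl1
    have hsub : ({a, b, c} : Finset V) ⊆ leavesS T S1 := by
      intro t ht
      rcases Finset.mem_insert.1 ht with rfl | ht
      · exact ha1
      rcases Finset.mem_insert.1 ht with rfl | ht
      · exact hb1
      rw [Finset.mem_singleton] at ht; subst ht; exact hc1
    have hc3 : ({a, b, c} : Finset V).card = 3 := by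
      rw [Finset.card_insert_of_notMem (by simp [hab, hac]), Finset.card_pair hbc]
    have heq3 : ({a, b, c} : Finset V) = leavesS T S1 :=
      Finset.eq_of_subset_of_card_le hsub (by omega)
    have hw_in : w ∈ ({a, b, c} : Finset V) := by
      rw [heq3, hleaves1]; exact Finset.mem_insert_self _ _
    -- memberships in S1 give ≠ u and leaf-ness in S
    have hmem : ∀ t, t ∈ leavesS T S1 → t ≠ w → t ∈ leavesS T S ∧ t ≠ u := by
      intro t ht htw
      have ht' : t ∈ (leavesS T S).erase u := by
        rw [hleaves1] at ht
        rcases Finset.mem_insert.1 ht with h | h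
        · exact absurd h htw
        · exact h
      exact ⟨Finset.mem_of_mem_erase ht', (Finset.mem_erase.1 ht').1⟩
    have hS1S : ∀ t, t ∈ leavesS T S1 → t ∈ S := by
      intro t ht
      exact Finset.mem_of_mem_erase (leavesS_subset (T := T) ht)
    have hgoal : 2 * (S.card - 1) = 2 * (S1.card - 1) + 2 := by omega
    rcases Finset.mem_insert.1 hw_in with rfl | hw_in2
    · -- w = a : triple (u, b, c)
      obtain ⟨hbL, hbu⟩ := hmem b hb1 (fun h => hab h.symm)
      obtain ⟨hcL, hcu⟩ := hmem c hc1 (fun h => hac h.symm)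
      have e1 : T.dist u b = T.dist w b + 1 := hldist b (hS1S b hb1) hbu
      have e2 : T.dist u c = T.dist w c + 1 := hldist c (hS1S c hc1) hcu
      exact ⟨u, b, c, hu, hbL, hcL, fun h => hbu h.symm, fun h => hcu h.symm, hbc, by omega⟩
    rcases Finset.mem_insert.1 hw_in2 with rfl | hw_in3
    · -- w = b : triple (a, u, c)
      obtain ⟨haL, hau⟩ := hmem a ha1 hab
      obtain ⟨hcL, hcu⟩ := hmem c hc1 (fun h => hbc h.symm)
      have e1 : T.dist u a = T.dist w a + 1 := hldist a (hS1S a ha1) hau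
      have e2 : T.dist u c = T.dist w c + 1 := hldist c (hS1S c hc1) hcu
      have c1 : T.dist a u = T.dist u a := SimpleGraph.dist_comm
      have c2 : T.dist a w = T.dist w a := SimpleGraph.dist_comm
      have c3 : T.dist u c = T.dist c u := SimpleGraph.dist_comm
      exact ⟨a, u, c, haL, hu, hcL, hau, hac, fun h => hcu h.symm, by omega⟩
    · -- w = c : triple (a, b, u)
      rw [Finset.mem_singleton] at hw_in3
      subst hw_in3
      obtain ⟨haL, hau⟩ := hmem a ha1 hac
      obtain ⟨hbL, hbu⟩ := hmem b hb1 hbc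
      have e1 : T.dist u a = T.dist w a + 1 := hldist a (hS1S a ha1) hau
      have e2 : T.dist u b = T.dist w b + 1 := hldist b (hS1S b hb1) hbu
      have c1 : T.dist a w = T.dist w a := SimpleGraph.dist_comm
      have c2 : T.dist b w = T.dist w b := SimpleGraph.dist_comm
      have c3 : T.dist a u = T.dist u a := SimpleGraph.dist_comm
      have c4 : T.dist b u = T.dist u b := SimpleGraph.dist_comm
      exact ⟨a, b, u, haL, hbL, hu, hab, hau, hbu, by omega⟩
  · -- degS w ≥ 3 : S1 is a path
    rw [if_neg hdw] at hleaves1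
    have hl1 : (leavesS T S1).card = 2 := by rw [hleaves1, herase_card]
    obtain ⟨a, b, hab, habeq⟩ := Finset.card_eq_two.1 hl1
    have ha1 : a ∈ leavesS T S1 := by rw [habeq]; exact Finset.mem_insert_self _ _
    have hb1 : b ∈ leavesS T S1 := by
      rw [habeq]; exact Finset.mem_insert.2 (Or.inr (Finset.mem_singleton_self b))
    obtain ⟨hd, hz⟩ := two_leaves_path hT (n-1) S1 hcard1 hS1 hl1 a ha1 b hb1 hab
    have hw1 : w ∈ S1 := Finset.mem_erase.2 ⟨hwu, hwS⟩
    have hsplit := hz w hw1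
    have hau : a ≠ u := (Finset.mem_erase.1 (leavesS_subset (T := T) ha1)).1
    have hbu : b ≠ u := (Finset.mem_erase.1 (leavesS_subset (T := T) hb1)).1
    have haS : a ∈ S := Finset.mem_of_mem_erase (leavesS_subset (T := T) ha1)
    have hbS : b ∈ S := Finset.mem_of_mem_erase (leavesS_subset (T := T) hb1)
    have haL : a ∈ leavesS T S := by
      rw [hleaves1] at ha1; exact Finset.mem_of_mem_erase ha1
    have hbL : b ∈ leavesS T S := by
      rw [hleaves1] at hb1; exact Finset.mem_of_mem_erase hb1
    have e1 : T.dist u a = T.dist w a + 1 := hldist a haS hau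
    have e2 : T.dist u b = T.dist w b + 1 := hldist b hbS hbu
    have c1 : T.dist a w = T.dist w a := SimpleGraph.dist_comm
    have c2 : T.dist a u = T.dist u a := SimpleGraph.dist_comm
    have c3 : T.dist b u = T.dist u b := SimpleGraph.dist_comm
    exact ⟨a, b, u, haL, hbL, hu, hab, hau, hbu, by omega⟩


lemma arith {N l p : ℕ} (hl : 4 ≤ l) (hln : l ≤ N) (hp1 : 1 ≤ p) (hpq : p ≤ N / l) :
    6 * (N / l) + 2 * min (N % l) 3 ≤
      6 * ((N - p) / (l - 1)) + 2 * min ((N - p) % (l - 1)) 3 := by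
  set q := N / l with hq
  set r := N % l with hr
  set M := N - p with hM
  set q' := M / (l - 1) with hq'
  set r' := M % (l - 1) with hr'
  have h1 : l * q + r = N := Nat.div_add_mod N l
  have h2 : r < l := Nat.mod_lt _ (by omega)
  have h3 : (l - 1) * q' + r' = M := Nat.div_add_mod M (l - 1)
  have h4 : r' < l - 1 := Nat.mod_lt _ (by omega)
  have hle : q ≤ l * q := Nat.le_mul_of_pos_left q (by omega)
  have e1 : (l - 1) * q + q = l * q := by
    rw [tsub_mul, one_mul]
    omega
  have hq'ge : q ≤ q' := by
    have h5 : q * (l - 1) ≤ M := by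
      have h6 : q * (l - 1) = (l - 1) * q := Nat.mul_comm _ _
      omega
    have h7 := (Nat.le_div_iff_mul_le (by omega : 0 < l - 1)).2 h5
    omega
  rcases eq_or_lt_of_le hq'ge with heq | hlt
  · have e2 : (l - 1) * q' = (l - 1) * q := by rw [← heq]
    have hrr' : r ≤ r' := by omega
    have hminle : min r 3 ≤ min r' 3 := min_le_min hrr' (le_refl 3)
    omega
  · have hm1 : min r 3 ≤ 3 := min_le_right _ _
    omega

/-- Main induction. -/
lemma main (hT : T.IsTree) : ∀ n : ℕ, ∀ S : Finset V, S.card = n → good T S →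
    3 ≤ (leavesS T S).card →
    ∃ a b c, a ∈ leavesS T S ∧ b ∈ leavesS T S ∧ c ∈ leavesS T S ∧
      6 * ((S.card - 1) / (leavesS T S).card) +
        2 * min ((S.card - 1) % (leavesS T S).card) 3
        ≤ T.dist a b + T.dist a c + T.dist b c := by
  intro n
  induction n using Nat.strong_induction_on with
  | _ n IH =>
  intro S hcard hS hl3
  have hlt : (leavesS T S).card < S.card :=
    leaves_card_lt hT hS (le_trans hl3 (Finset.card_le_card leavesS_subset))
  rcases eq_or_lt_of_le hl3 with h3 | h4
  · -- exactly 3 leaves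
    obtain ⟨a, b, c, ha, hb, hc, _, _, _, hsum⟩ := three_leaves hT n S hcard hS h3.symm
    refine ⟨a, b, c, ha, hb, hc, ?_⟩
    rw [← h3]
    have hdm := Nat.div_add_mod (S.card - 1) 3
    have hmod : (S.card - 1) % 3 < 3 := Nat.mod_lt _ (by omega)
    have hmineq : min ((S.card - 1) % 3) 3 = (S.card - 1) % 3 := min_eq_left (by omega)
    omega
  · -- at least 4 leaves
    obtain ⟨u, hu, hshort⟩ := exists_short_leaf hT hS hl3
    have hBne := branch_nonempty hT hS hl3
    have hpos := dB_pos hT hu hBne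
    obtain ⟨k, hk⟩ : ∃ k, dB T S u = k + 1 := ⟨dB T S u - 1, by omega⟩
    obtain ⟨S', hsub, hgood', hcard', hleaves'⟩ := rem hT k S hS u hu hBne hk
    have hl' : (leavesS T S').card = (leavesS T S).card - 1 := by
      rw [hleaves', Finset.card_erase_of_mem hu]
    have hlt' : S'.card < n := by omega
    obtain ⟨a, b, c, ha, hb, hc, hsum⟩ := IH S'.card hlt' S' rfl hgood' (by omega)
    have hmem : ∀ t, t ∈ leavesS T S' → t ∈ leavesS T S := by
      intro t ht; rw [hleaves'] at ht; exact Finset.mem_of_mem_erase ht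
    refine ⟨a, b, c, hmem a ha, hmem b hb, hmem c hc, le_trans ?_ hsum⟩
    rw [hl']
    have hpq : k + 1 ≤ (S.card - 1) / (leavesS T S).card := by rw [← hk]; exact hshort
    have harith := arith (N := S.card - 1) (l := (leavesS T S).card) (p := k + 1)
      h4 (by omega) (by omega) hpq
    have hce : S'.card - 1 = (S.card - 1) - (k + 1) := by omega
    rw [hce]
    exact harith

end TriameterAux2

/-- The triameter of a graph `G`: the maximum of `d(a,b) + d(a,c) + d(b,c)`
over all triples of vertices `a, b, c`. -/
noncomputable def SimpleGraph.triameter {V : Type*} [Fintype V] (G : SimpleGraph V) : ℕ :=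
  Finset.univ.sup fun p : V × V × V =>
    G.dist p.1 p.2.1 + G.dist p.1 p.2.2 + G.dist p.2.1 p.2.2

/-- Let `T` be a tree with `n ≥ 4` vertices and `l ≥ 3` leaves. Then
`tr(T) ≥ 6⌊(n-1)/l⌋ + 2·min{(n-1) mod l, 3}`. -/
theorem triameter_tree_lower_bound {V : Type*} [Fintype V]
    (T : SimpleGraph V) [DecidableRel T.Adj] (hT : T.IsTree)
    (hn : 4 ≤ Fintype.card V)
    (hl : 3 ≤ (Finset.univ.filter fun v : V => T.degree v = 1).card) :
    6 * ((Fintype.card V - 1) / (Finset.univ.filter fun v : V => T.degree v = 1).card) +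
      2 * min ((Fintype.card V - 1) % (Finset.univ.filter fun v : V => T.degree v = 1).card) 3
      ≤ T.triameter := by
  classical
  have hVne : Nonempty V := Fintype.card_pos_iff.1 (by omega)
  have hgood : TriameterAux.good T Finset.univ :=
    ⟨Finset.univ_nonempty, fun x _ y _ p hp z _ => Finset.mem_univ z⟩
  have hdeg : ∀ v, TriameterAux.degS T Finset.univ v = T.degree v := by
    intro v
    have h1 : TriameterAux.nbrS T Finset.univ v = T.neighborFinset v := by
      ext u
      rw [TriameterAux.mem_nbrS]
      simp [SimpleGraph.mem_neighborFinset]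
    unfold TriameterAux.degS
    rw [h1, SimpleGraph.card_neighborFinset_eq_degree]
  have hleq : TriameterAux.leavesS T Finset.univ =
      Finset.univ.filter fun v : V => T.degree v = 1 := by
    ext v
    rw [TriameterAux.mem_leavesS, Finset.mem_filter, hdeg v]
  have hcardeq : (Finset.univ : Finset V).card = Fintype.card V := Finset.card_univ
  obtain ⟨a, b, c, _, _, _, hsum⟩ := TriameterAux2.main hT (Finset.univ : Finset V).card
    Finset.univ rfl hgood (by rw [hleq]; exact hl)
  rw [hleq, hcardeq] at hsum
  refine le_trans hsum ?_
  exact Finset.le_sup (f := fun p : V × V × V =>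
    T.dist p.1 p.2.1 + T.dist p.1 p.2.2 + T.dist p.2.1 p.2.2) (Finset.mem_univ (a, b, c))
end

section
/- For every pair of integers n ≥ 4 and 3 ≤ l ≤ n−1, there exists a tree T with exactly n vertices and exactly l leaves such that tr(T) = 6·⌊(n−1)/l⌋ + 2·min{(n−1) mod l, 3}. -/
/-!
The extremal tree is a spider with `l` legs whose lengths `q = ⌊(n-1)/l⌋` and `q + 1` differ by at
most one, `r = (n-1) mod l` of them long: it has `l * q + r + 1 = n` vertices and its leaves are
the ends of the legs. It is a tree because it is the graph of a parent map under which every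
vertex eventually reaches the body, a fixed point. Distances are bounded above by walks through
the body and below by the 1-Lipschitz signed height. Three vertices on distinct legs have distance
sum twice the sum of their heights, at most `2 (3q + min r 3)`, attained at the ends of the three
longest legs; if two of them share a leg the sum is at most `4 (q + min r 1)`, which is no larger
as `q ≥ 1`.
-/

namespace Function

variable {α : Type*} {f : α → α}

lemma exists_iterate_eq_iff {x y : α} :
    (∃ k, f^[k] x = y) ↔ x = y ∨ ∃ k, f^[k] (f x) = y := by
  constructor
  · rintro ⟨_ | k, hk⟩
    · exact .inl hk
    · exact .inr ⟨k, hk⟩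
  · rintro (rfl | ⟨k, hk⟩)
    · exact ⟨0, rfl⟩
    · exact ⟨k + 1, hk⟩

lemma IsPeriodicPt.eq_of_iterate_eq_of_isFixedPt {x r : α} {m n : ℕ} (hx : IsPeriodicPt f n x)
    (hn : 0 < n) (hr : IsFixedPt f r) (hm : f^[m] x = r) : x = r := by
  rw [← (hx.mul_const m).eq, ← Nat.sub_add_cancel (Nat.le_mul_of_pos_left m hn),
    iterate_add_apply, hm, iterate_fixed hr]

end Function

namespace SimpleGraph

variable {V : Type*}

def parentGraph (p : V → V) : SimpleGraph V := fromRel fun u v => p u = v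

variable {p : V → V}

@[simp] lemma parentGraph_adj {u v : V} :
    (parentGraph p).Adj u v ↔ u ≠ v ∧ (p u = v ∨ p v = u) :=
  fromRel_adj ..

instance [DecidableEq V] : DecidableRel (parentGraph p).Adj :=
  fun _ _ => decidable_of_iff' _ parentGraph_adj

lemma parentGraph_adj_apply {v : V} (h : v ≠ p v) : (parentGraph p).Adj v (p v) :=
  parentGraph_adj.2 ⟨h, Or.inl rfl⟩

lemma parentGraph_exists_walk_iterate_length_le (v : V) :
    ∀ k, ∃ w : (parentGraph p).Walk v (p^[k] v), w.length ≤ k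
  | 0 => ⟨.nil, le_rfl⟩
  | k + 1 => by
    obtain ⟨w, hw⟩ := parentGraph_exists_walk_iterate_length_le v k
    rw [Function.iterate_succ_apply']
    by_cases h : p^[k] v = p (p^[k] v)
    · exact ⟨w.copy rfl h, by simp only [Walk.length_copy]; omega⟩
    · exact ⟨w.concat (parentGraph_adj_apply h), by simp only [Walk.length_concat]; omega⟩

lemma parentGraph_dist_iterate_le (v : V) (k : ℕ) : (parentGraph p).dist v (p^[k] v) ≤ k :=
  let ⟨w, hw⟩ := parentGraph_exists_walk_iterate_length_le v k
  (dist_le w).trans hw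

lemma parentGraph_connected {r : V} (hr : ∀ v, ∃ k, p^[k] v = r) : (parentGraph p).Connected :=
  have reach (v : V) : (parentGraph p).Reachable v r :=
    let ⟨k, hk⟩ := hr v
    hk ▸ (parentGraph_exists_walk_iterate_length_le v k).elim fun w _ => w.reachable
  { preconnected := fun u v => (reach u).trans (reach v).symm
    nonempty := ⟨r⟩ }

/-- Walks avoiding the edge from `u` to its parent stay on one side of it: either inside
the subtree of descendants of `u` or outside it. -/
lemma Walk.exists_iterate_eq_iff_of_edge_notMem {u x y : V} (w : (parentGraph p).Walk x y)
    (hw : s(u, p u) ∉ w.edges) : (∃ k, p^[k] x = u) ↔ ∃ k, p^[k] y = u := by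
  induction w with
  | nil => rfl
  | @cons x z y h w ih =>
    rw [Walk.edges_cons, List.mem_cons, not_or] at hw
    rw [← ih hw.2]
    rcases (parentGraph_adj.1 h).2 with rfl | rfl
    · have hxu : x ≠ u := by rintro rfl; exact hw.1 rfl
      rw [Function.exists_iterate_eq_iff (x := x)]
      simp [hxu]
    · have hzu : z ≠ u := by rintro rfl; exact hw.1 Sym2.eq_swap
      rw [Function.exists_iterate_eq_iff (x := z)]
      simp [hzu]

lemma parentGraph_isBridge {r : V} (hfix : p r = r) (hr : ∀ v, ∃ k, p^[k] v = r) {v : V}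
    (hv : v ≠ p v) : (parentGraph p).IsBridge s(v, p v) := by
  rw [isBridge_iff_forall_walk_mem_edges]
  intro w
  by_contra hw
  obtain ⟨k, hk⟩ := (w.exists_iterate_eq_iff_of_edge_notMem hw).1 ⟨0, rfl⟩
  obtain ⟨m, hm⟩ := hr v
  have hvr : v = r :=
    Function.IsPeriodicPt.eq_of_iterate_eq_of_isFixedPt (n := k + 1) hk k.succ_pos hfix hm
  exact hv (hvr ▸ hfix.symm)

lemma parentGraph_isAcyclic {r : V} (hfix : p r = r) (hr : ∀ v, ∃ k, p^[k] v = r) :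
    (parentGraph p).IsAcyclic := by
  rw [isAcyclic_iff_forall_adj_isBridge]
  intro v w hvw
  rcases parentGraph_adj.1 hvw with ⟨hne, rfl | rfl⟩
  · exact parentGraph_isBridge hfix hr hne
  · rw [Sym2.eq_swap]
    exact parentGraph_isBridge hfix hr hne.symm

lemma parentGraph_isTree {r : V} (hfix : p r = r) (hr : ∀ v, ∃ k, p^[k] v = r) :
    (parentGraph p).IsTree :=
  ⟨parentGraph_connected hr, parentGraph_isAcyclic hfix hr⟩

lemma parentGraph_degree_eq_one {v : V} [Fintype ((parentGraph p).neighborSet v)]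
    (hv : v ≠ p v) (hleaf : ∀ w, p w ≠ v) : (parentGraph p).degree v = 1 :=
  degree_eq_one_iff_existsUnique_adj.2 ⟨p v, parentGraph_adj_apply hv, fun w h => by
    simpa [hleaf w, eq_comm] using (parentGraph_adj.1 h).2⟩

lemma degree_ne_one_of_adj_of_adj {G : SimpleGraph V} {v u w : V} [Fintype (G.neighborSet v)]
    (hu : G.Adj v u) (hw : G.Adj v w) (huw : u ≠ w) : G.degree v ≠ 1 := by
  rw [Ne, degree_eq_one_iff_existsUnique_adj]
  rintro ⟨x, -, hx⟩
  exact huw ((hx u hu).trans (hx w hw).symm)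

lemma Walk.sub_le_length {G : SimpleGraph V} {f : V → ℤ}
    (hf : ∀ u v, G.Adj u v → f u ≤ f v + 1) {u v : V} (w : G.Walk u v) :
    f u - f v ≤ w.length := by
  induction w with
  | nil => simp
  | cons h w ih => have := hf _ _ h; push_cast [Walk.length_cons]; omega

lemma Reachable.sub_le_dist {G : SimpleGraph V} {f : V → ℤ}
    (hf : ∀ u v, G.Adj u v → f u ≤ f v + 1) {u v : V} (h : G.Reachable u v) :
    f u - f v ≤ G.dist u v :=
  let ⟨w, hw⟩ := h.exists_walk_length_eq_dist
  hw ▸ w.sub_le_length hf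

end SimpleGraph

open SimpleGraph

/-- The spider with legs of lengths `len i`: `none` is the body and `some ⟨i, j⟩` is the vertex
at distance `j + 1` from it on leg `i`. -/
abbrev Spider {ι : Type*} (len : ι → ℕ) := Option (Σ i, Fin (len i))

namespace Spider

variable {ι : Type*} {len : ι → ℕ}

def parent : Spider len → Spider len
  | none => none
  | some ⟨_, ⟨0, _⟩⟩ => none
  | some ⟨i, ⟨j + 1, h⟩⟩ => some ⟨i, ⟨j, Nat.lt_of_succ_lt h⟩⟩

def ht : Spider len → ℕ
  | none => 0
  | some ⟨_, j⟩ => j + 1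

def leg : Spider len → Option ι := Option.map Sigma.fst

@[simp] lemma ht_some (i : ι) (j : Fin (len i)) : ht (some ⟨i, j⟩ : Spider len) = j + 1 := rfl

@[simp] lemma leg_some (i : ι) (j : Fin (len i)) : leg (some ⟨i, j⟩ : Spider len) = some i := rfl

@[simp] lemma ht_none : ht (none : Spider len) = 0 := rfl

@[simp] lemma leg_none : leg (none : Spider len) = none := rfl

@[simp] lemma ht_eq_zero {v : Spider len} : ht v = 0 ↔ v = none := by
  rcases v with _ | ⟨i, j⟩ <;> simp [ht]

@[simp] lemma leg_eq_none {v : Spider len} : leg v = none ↔ v = none := by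
  simp [leg]

lemma eq_of_leg_eq_of_ht_eq {u v : Spider len} (hleg : leg u = leg v) (hht : ht u = ht v) :
    u = v := by
  rcases u with _ | ⟨i, a⟩ <;> rcases v with _ | ⟨i', b⟩
  · rfl
  · simp at hleg
  · simp at hleg
  · obtain rfl : i = i' := by simpa using hleg
    simp only [ht_some, add_left_inj, Fin.val_inj] at hht
    rw [hht]

lemma ht_parent (v : Spider len) : ht (parent v) = ht v - 1 := by
  rcases v with _ | ⟨i, _ | j, h⟩ <;> rfl

lemma parent_eq_none_or_leg_parent (v : Spider len) :
    parent v = none ∨ leg (parent v) = leg v := by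
  rcases v with _ | ⟨i, _ | j, h⟩ <;> simp [parent]

lemma ht_iterate_parent (v : Spider len) (k : ℕ) : ht (parent^[k] v) = ht v - k := by
  induction k with
  | zero => rfl
  | succ k ih => rw [Function.iterate_succ_apply', ht_parent, ih]; omega

lemma leg_iterate_parent (v : Spider len) {k : ℕ} (hk : k < ht v) :
    leg (parent^[k] v) = leg v := by
  induction k with
  | zero => rfl
  | succ k ih =>
    rw [Function.iterate_succ_apply']
    rcases parent_eq_none_or_leg_parent (parent^[k] v) with h | h
    · have := ht_iterate_parent v (k + 1)
      rw [Function.iterate_succ_apply', h, ht_none] at this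
      omega
    · rw [h, ih (by omega)]

lemma iterate_parent_ht (v : Spider len) : parent^[ht v] v = none := by
  rw [← ht_eq_zero, ht_iterate_parent, Nat.sub_self]

variable (len) in
abbrev graph : SimpleGraph (Spider len) := parentGraph parent

lemma isTree : (graph len).IsTree :=
  parentGraph_isTree (r := none) rfl fun v => ⟨ht v, iterate_parent_ht v⟩

lemma dist_le_ht_add_ht (u v : Spider len) : (graph len).dist u v ≤ ht u + ht v := by
  have hu := iterate_parent_ht u ▸ parentGraph_dist_iterate_le (p := parent) u (ht u)
  have hv := iterate_parent_ht v ▸ parentGraph_dist_iterate_le (p := parent) v (ht v)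
  calc (graph len).dist u v ≤ (graph len).dist u none + (graph len).dist none v :=
        isTree.1.dist_triangle
    _ ≤ ht u + ht v := by rw [dist_comm (u := none)]; exact add_le_add hu hv

/-- The body lies on every leg. -/
def SharesLeg (u v : Spider len) : Prop := u = none ∨ v = none ∨ leg u = leg v

lemma SharesLeg.symm {u v : Spider len} (h : SharesLeg u v) : SharesLeg v u := by
  rcases h with h | h | h
  exacts [.inr (.inl h), .inl h, .inr (.inr h.symm)]

lemma SharesLeg.iterate_parent {u v : Spider len} (h : SharesLeg u v) (hvu : ht v ≤ ht u) :
    parent^[ht u - ht v] u = v := by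
  refine eq_of_leg_eq_of_ht_eq ?_ (by rw [ht_iterate_parent]; omega)
  by_cases hv : v = none
  · simp [hv, iterate_parent_ht]
  have hv : 0 < ht v := Nat.pos_of_ne_zero (by simpa using hv)
  rw [leg_iterate_parent u (by omega)]
  rcases h with rfl | rfl | h
  · simp only [ht_none] at hvu; omega
  · simp only [ht_none] at hv; omega
  · exact h

lemma SharesLeg.dist_le {u v : Spider len} (h : SharesLeg u v) (hvu : ht v ≤ ht u) :
    (graph len).dist u v ≤ ht u - ht v := by
  simpa only [h.iterate_parent hvu] using parentGraph_dist_iterate_le (p := parent) u (ht u - ht v)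

section SignedHeight

variable [DecidableEq ι]

/-- Being 1-Lipschitz, it shows that the path between two legs through the body is shortest. -/
def signedHt (i : ι) (v : Spider len) : ℤ := if leg v = some i then ht v else -ht v

lemma signedHt_le_add_one (i : ι) {u v : Spider len} (h : (graph len).Adj u v) :
    signedHt i u ≤ signedHt i v + 1 := by
  have hparent (x : Spider len) : |signedHt i x - signedHt i (parent x)| ≤ 1 := by
    rcases x with _ | ⟨i', _ | j, hj⟩
    · simp [parent]
    · simp only [signedHt, parent, leg_some, ht_some, leg_none, ht_none, Option.some.injEq]
      split_ifs <;> simp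
    · simp only [signedHt, parent, leg_some, ht_some, Option.some.injEq]
      split_ifs <;> rw [abs_le] <;> constructor <;> push_cast <;> omega
  rcases (parentGraph_adj.1 h).2 with rfl | rfl
  · have := hparent u; rw [abs_le] at this; omega
  · have := hparent v; rw [abs_le] at this; omega

end SignedHeight

lemma dist_eq_ht_add_ht_of_leg_ne {i : ι} {u v : Spider len} (hu : leg u = some i)
    (hv : leg v ≠ some i) : (graph len).dist u v = ht u + ht v := by
  classical
  refine le_antisymm (dist_le_ht_add_ht u v) ?_
  have := (isTree.1 u v).sub_le_dist fun _ _ => signedHt_le_add_one i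
  simp only [signedHt, hu, hv, if_true, if_false] at this
  omega

lemma ht_le_len {i : ι} {v : Spider len} (h : leg v = some i) : ht v ≤ len i := by
  rcases v with _ | ⟨i', j⟩
  · simp at h
  · obtain rfl : i' = i := by simpa using h
    simp only [ht_some]
    omega

def legEnd (i : ι) (hi : 0 < len i) : Spider len := some ⟨i, ⟨len i - 1, Nat.sub_lt hi one_pos⟩⟩

variable {i : ι} {hi : 0 < len i}

@[simp] lemma ht_legEnd : ht (legEnd i hi) = len i := by
  simp only [legEnd, ht_some]
  omega

@[simp] lemma leg_legEnd : leg (legEnd i hi) = some i := rfl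

lemma parent_ne_legEnd (w : Spider len) : parent w ≠ legEnd i hi := by
  intro h
  have hw := ht_parent w
  rw [h, ht_legEnd] at hw
  rcases parent_eq_none_or_leg_parent w with h' | h'
  · simp [h, legEnd] at h'
  · rw [h, leg_legEnd] at h'
    have := ht_le_len h'.symm
    omega

lemma dist_legEnd_legEnd {j : ι} {hj : 0 < len j} (hij : i ≠ j) :
    (graph len).dist (legEnd i hi) (legEnd j hj) = len i + len j := by
  rw [dist_eq_ht_add_ht_of_leg_ne leg_legEnd (by simpa using hij.symm), ht_legEnd, ht_legEnd]

lemma ht_le {L : ℕ} (hL : ∀ i, len i ≤ L) (v : Spider len) : ht v ≤ L := by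
  rcases v with _ | ⟨i, j⟩
  · exact Nat.zero_le L
  · exact ht_le_len (leg_some i j) |>.trans (hL i)

lemma SharesLeg.dist_add_dist_add_dist_le {L : ℕ} (hL : ∀ i, len i ≤ L) {a b : Spider len}
    (h : SharesLeg a b) (c : Spider len) :
    (graph len).dist a b + (graph len).dist a c + (graph len).dist b c ≤ 4 * L := by
  have hac := dist_le_ht_add_ht a c
  have hbc := dist_le_ht_add_ht b c
  have := ht_le hL a
  have := ht_le hL b
  have := ht_le hL c
  rcases le_total (ht b) (ht a) with hba | hab
  · have := h.dist_le hba
    omega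
  · have := h.symm.dist_le hab
    rw [dist_comm] at this
    omega

lemma dist_add_dist_add_dist_le {L S : ℕ} (hL : ∀ i, len i ≤ L)
    (hS : ∀ i j k, i ≠ j → i ≠ k → j ≠ k → len i + len j + len k ≤ S) (hLS : 2 * L ≤ S)
    (a b c : Spider len) :
    (graph len).dist a b + (graph len).dist a c + (graph len).dist b c ≤ 2 * S := by
  by_cases hab : SharesLeg a b
  · have := hab.dist_add_dist_add_dist_le hL c
    omega
  by_cases hac : SharesLeg a c
  · have := hac.dist_add_dist_add_dist_le hL b
    rw [dist_comm (u := c)] at this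
    omega
  by_cases hbc : SharesLeg b c
  · have := hbc.dist_add_dist_add_dist_le hL a
    rw [dist_comm (u := b) (v := a), dist_comm (u := c) (v := a)] at this
    omega
  simp only [SharesLeg, not_or] at hab hac hbc
  obtain ⟨ia, hia⟩ := Option.ne_none_iff_exists'.1 (leg_eq_none.not.2 hab.1)
  obtain ⟨ib, hib⟩ := Option.ne_none_iff_exists'.1 (leg_eq_none.not.2 hab.2.1)
  obtain ⟨ic, hic⟩ := Option.ne_none_iff_exists'.1 (leg_eq_none.not.2 hac.2.1)
  have := hS ia ib ic (by rintro rfl; exact hab.2.2 (hia.trans hib.symm))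
    (by rintro rfl; exact hac.2.2 (hia.trans hic.symm))
    (by rintro rfl; exact hbc.2.2 (hib.trans hic.symm))
  have := ht_le_len hia
  have := ht_le_len hib
  have := ht_le_len hic
  have := dist_le_ht_add_ht a b
  have := dist_le_ht_add_ht a c
  have := dist_le_ht_add_ht b c
  omega

variable [Fintype ι]

lemma card_eq : Fintype.card (Spider len) = ∑ i, len i + 1 := by
  simp [Fintype.card_sigma]

lemma triameter_le {L S : ℕ} (hL : ∀ i, len i ≤ L)
    (hS : ∀ i j k, i ≠ j → i ≠ k → j ≠ k → len i + len j + len k ≤ S) (hLS : 2 * L ≤ S) :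
    (graph len).triameter ≤ 2 * S :=
  Finset.sup_le fun p _ => dist_add_dist_add_dist_le hL hS hLS p.1 p.2.1 p.2.2

lemma le_triameter {i j k : ι} (hij : i ≠ j) (hik : i ≠ k) (hjk : j ≠ k) (hi : 0 < len i)
    (hj : 0 < len j) (hk : 0 < len k) :
    2 * (len i + len j + len k) ≤ (graph len).triameter := by
  have := Finset.le_sup (f := fun p : Spider len × Spider len × Spider len =>
      (graph len).dist p.1 p.2.1 + (graph len).dist p.1 p.2.2 + (graph len).dist p.2.1 p.2.2)
    (Finset.mem_univ (legEnd i hi, legEnd j hj, legEnd k hk))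
  simp only [dist_legEnd_legEnd hij, dist_legEnd_legEnd hik, dist_legEnd_legEnd hjk] at this
  unfold SimpleGraph.triameter
  omega

variable [DecidableEq ι]

lemma degree_legEnd : (graph len).degree (legEnd i hi) = 1 :=
  parentGraph_degree_eq_one (fun h => by have := congrArg ht h; simp [ht_parent] at this; omega)
    parent_ne_legEnd

lemma degree_eq_one_iff [Nontrivial ι] (hlen : ∀ i, 0 < len i) {v : Spider len} :
    (graph len).degree v = 1 ↔ ∃ i, v = legEnd i (hlen i) := by
  refine ⟨fun h => ?_, by rintro ⟨i, rfl⟩; exact degree_legEnd⟩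
  rcases v with _ | ⟨i, j⟩
  · obtain ⟨a, b, hab⟩ := exists_pair_ne ι
    refine absurd h (degree_ne_one_of_adj_of_adj (u := some ⟨a, ⟨0, hlen a⟩⟩)
      (w := some ⟨b, ⟨0, hlen b⟩⟩) ?_ ?_ (by simp [hab]))
    · exact parentGraph_adj.2 ⟨by simp, .inr rfl⟩
    · exact parentGraph_adj.2 ⟨by simp, .inr rfl⟩
  · refine ⟨i, ?_⟩
    by_contra hne
    have hj : j.1 + 1 < len i := by
      refine lt_of_le_of_ne j.2 fun hj => hne ?_
      simp only [legEnd, Option.some.injEq, Sigma.mk.injEq, heq_eq_eq, true_and]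
      ext
      simp only
      omega
    refine absurd h (degree_ne_one_of_adj_of_adj (u := parent (some ⟨i, j⟩))
      (w := some ⟨i, ⟨j + 1, hj⟩⟩) ?_ ?_ fun heq => by
        have := congrArg ht heq; simp [ht_parent] at this; omega)
    · exact parentGraph_adj_apply fun heq => by simpa [ht_parent] using congrArg ht heq
    · exact parentGraph_adj.2 ⟨fun heq => by simpa using congrArg ht heq, .inr rfl⟩

lemma card_filter_degree_eq_one [Nontrivial ι] (hlen : ∀ i, 0 < len i) :
    (Finset.univ.filter fun v => (graph len).degree v = 1).card = Fintype.card ι := by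
  have hinj : Function.Injective fun i => (legEnd i (hlen i) : Spider len) :=
    fun i j h => by simpa using congrArg leg h
  rw [← Finset.card_univ, ← Finset.card_image_of_injective _ hinj]
  congr 1
  ext v
  simp [degree_eq_one_iff hlen, eq_comm]

end Spider

def balancedLegs (q r : ℕ) {l : ℕ} (i : Fin l) : ℕ := q + if (i : ℕ) < r then 1 else 0

lemma sum_balancedLegs (q r l : ℕ) : ∑ i : Fin l, balancedLegs q r i = l * q + min l r := by
  simp [balancedLegs, Finset.sum_add_distrib, Finset.sum_boole, Fin.card_filter_val_lt]

lemma balancedLegs_le (q r : ℕ) {l : ℕ} (i : Fin l) : balancedLegs q r i ≤ q + min r 1 := by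
  unfold balancedLegs
  split_ifs <;> omega

lemma balancedLegs_add_add_le (q r : ℕ) {l : ℕ} {i j k : Fin l} (hij : i ≠ j) (hik : i ≠ k)
    (hjk : j ≠ k) :
    balancedLegs q r i + balancedLegs q r j + balancedLegs q r k ≤ 3 * q + min r 3 := by
  have := Fin.val_ne_of_ne hij
  have := Fin.val_ne_of_ne hik
  have := Fin.val_ne_of_ne hjk
  unfold balancedLegs
  split_ifs <;> omega

lemma triameter_graph_balancedLegs {l q : ℕ} (r : ℕ) (hl : 3 ≤ l) (hq : 1 ≤ q) :
    (Spider.graph (balancedLegs q r : Fin l → ℕ)).triameter = 6 * q + 2 * min r 3 := by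
  have hpos (i : Fin l) : 0 < balancedLegs q r i := by unfold balancedLegs; omega
  refine le_antisymm ?_ ?_
  · have := Spider.triameter_le (len := (balancedLegs q r : Fin l → ℕ)) (balancedLegs_le q r)
      (fun _ _ _ => balancedLegs_add_add_le q r) (by omega : 2 * (q + min r 1) ≤ 3 * q + min r 3)
    omega
  · have := Spider.le_triameter (i := ⟨0, by omega⟩) (j := ⟨1, by omega⟩) (k := ⟨2, by omega⟩)
      (by simp [Fin.ext_iff]) (by simp [Fin.ext_iff]) (by simp [Fin.ext_iff])
      (hpos _) (hpos _) (hpos _)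
    simp only [balancedLegs] at this
    split_ifs at this <;> omega

theorem exists_tree_triameter_eq_general (n l : ℕ) (hl : 3 ≤ l) (hln : l ≤ n - 1) :
    ∃ (V : Type) (_ : Fintype V) (T : SimpleGraph V) (_ : DecidableRel T.Adj),
      T.IsTree ∧ Fintype.card V = n ∧
      (Finset.univ.filter fun v : V => T.degree v = 1).card = l ∧
      T.triameter = 6 * ((n - 1) / l) + 2 * min ((n - 1) % l) 3 := by
  have hq : 1 ≤ (n - 1) / l := (Nat.one_le_div_iff (by omega)).2 hln
  have : Nontrivial (Fin l) := Fin.nontrivial_iff_two_le.2 (by omega)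
  refine ⟨_, inferInstance, Spider.graph (balancedLegs ((n - 1) / l) ((n - 1) % l) : Fin l → ℕ),
    inferInstance, Spider.isTree, ?_, ?_, triameter_graph_balancedLegs _ hl hq⟩
  · have := Nat.div_add_mod (n - 1) l
    have := Nat.mod_lt (n - 1) (by omega : 0 < l)
    rw [Spider.card_eq, sum_balancedLegs, min_eq_right this.le]
    omega
  · rw [Spider.card_filter_degree_eq_one fun i => by unfold balancedLegs; omega, Fintype.card_fin]

/-- For every pair of integers `n ≥ 4` and `3 ≤ l ≤ n - 1` there is a tree with exactly
`n` vertices and exactly `l` leaves whose triameter equals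
`6⌊(n-1)/l⌋ + 2·min{(n-1) mod l, 3}`. -/
theorem exists_tree_triameter_eq (n l : ℕ) (hn : 4 ≤ n) (hl : 3 ≤ l) (hln : l ≤ n - 1) :
    ∃ (V : Type) (_ : Fintype V) (T : SimpleGraph V) (_ : DecidableRel T.Adj),
      T.IsTree ∧ Fintype.card V = n ∧
      (Finset.univ.filter fun v : V => T.degree v = 1).card = l ∧
      T.triameter = 6 * ((n - 1) / l) + 2 * min ((n - 1) % l) 3 :=
  exists_tree_triameter_eq_general n l hl hln
end

section
/- Let G be a connected block graph, i.e. a connected finite simple graph whose shortest-path metric d = d_G satisfies the 4-point condition: d(x,y) + d(z,t) ≤ max{d(x,z) + d(y,t), d(x,t) + d(y,z)} for all vertices x, y, z, t. If a, b, c ∈ V(G) satisfy d(a,b) + d(a,c) + d(b,c) = tr(G), then max{d(a,b), d(a,c), d(b,c)} = diam(G); that is, every triametral triple of vertices in a connected block graph contains a diametral pair. -/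
set_option maxHeartbeats 4000000 in
/-- In a connected block graph (characterized by the 4-point condition on its
shortest-path metric), every triametral triple contains a diametral pair. -/
theorem triametral_triple_contains_diametral_pair {V : Type*} [Fintype V]
    (G : SimpleGraph V) (hc : G.Connected)
    (h4 : ∀ x y z t : V,
      G.dist x y + G.dist z t ≤ max (G.dist x z + G.dist y t) (G.dist x t + G.dist y z))
    (a b c : V) (htri : G.dist a b + G.dist a c + G.dist b c = G.triameter) :
    max (max (G.dist a b) (G.dist a c)) (G.dist b c) = G.diam := by
  have hne : Nonempty V := hc.nonempty
  have hediam : G.ediam ≠ ⊤ := by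
    obtain ⟨x, y, hxy⟩ := G.exists_edist_eq_ediam_of_finite
    rw [← hxy, SimpleGraph.edist_ne_top_iff_reachable]
    exact hc.preconnected x y
  obtain ⟨u, v, huv⟩ := G.exists_dist_eq_diam
  have htr : ∀ x y z : V, G.dist x y + G.dist x z + G.dist y z ≤
      G.dist a b + G.dist a c + G.dist b c := by
    intro x y z
    rw [htri]
    unfold SimpleGraph.triameter
    exact Finset.le_sup (f := fun p : V × V × V =>
      G.dist p.1 p.2.1 + G.dist p.1 p.2.2 + G.dist p.2.1 p.2.2) (Finset.mem_univ (x, y, z))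
  have hD : ∀ x y : V, G.dist x y ≤ G.dist u v := by
    intro x y; rw [huv]; exact G.dist_le_diam hediam
  rw [← huv]
  have s0 : G.dist b a = G.dist a b := G.dist_comm
  have s1 : G.dist c a = G.dist a c := G.dist_comm
  have s2 : G.dist u a = G.dist a u := G.dist_comm
  have s3 : G.dist v a = G.dist a v := G.dist_comm
  have s4 : G.dist c b = G.dist b c := G.dist_comm
  have s5 : G.dist u b = G.dist b u := G.dist_comm
  have s6 : G.dist v b = G.dist b v := G.dist_comm
  have s7 : G.dist u c = G.dist c u := G.dist_comm
  have s8 : G.dist v c = G.dist c v := G.dist_comm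
  have s9 : G.dist v u = G.dist u v := G.dist_comm
  have b0 := hD a b
  have b1 := hD a c
  have b2 := hD a u
  have b3 := hD a v
  have b4 := hD b c
  have b5 := hD b u
  have b6 := hD b v
  have b7 := hD c u
  have b8 := hD c v
  have b9 := hD u v
  have m0 := htr a b c
  have m1 := htr a b u
  have m2 := htr a b v
  have m3 := htr a c u
  have m4 := htr a c v
  have m5 := htr a u v
  have m6 := htr b c u
  have m7 := htr b c v
  have m8 := htr b u v
  have m9 := htr c u v
  have Q0 : (G.dist a b + G.dist c u = G.dist a c + G.dist b u ∧ G.dist a u + G.dist b c ≤ G.dist a b + G.dist c u) ∨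
      (G.dist a b + G.dist c u = G.dist a u + G.dist b c ∧ G.dist a c + G.dist b u ≤ G.dist a b + G.dist c u) ∨
      (G.dist a c + G.dist b u = G.dist a u + G.dist b c ∧ G.dist a b + G.dist c u ≤ G.dist a c + G.dist b u) := by
    have h1 := h4 a b c u
    have h2 := h4 a c b u
    have h3 := h4 a u b c
    omega
  have Q1 : (G.dist a b + G.dist c v = G.dist a c + G.dist b v ∧ G.dist a v + G.dist b c ≤ G.dist a b + G.dist c v) ∨
      (G.dist a b + G.dist c v = G.dist a v + G.dist b c ∧ G.dist a c + G.dist b v ≤ G.dist a b + G.dist c v) ∨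
      (G.dist a c + G.dist b v = G.dist a v + G.dist b c ∧ G.dist a b + G.dist c v ≤ G.dist a c + G.dist b v) := by
    have h1 := h4 a b c v
    have h2 := h4 a c b v
    have h3 := h4 a v b c
    omega
  have Q2 : (G.dist a b + G.dist u v = G.dist a u + G.dist b v ∧ G.dist a v + G.dist b u ≤ G.dist a b + G.dist u v) ∨
      (G.dist a b + G.dist u v = G.dist a v + G.dist b u ∧ G.dist a u + G.dist b v ≤ G.dist a b + G.dist u v) ∨
      (G.dist a u + G.dist b v = G.dist a v + G.dist b u ∧ G.dist a b + G.dist u v ≤ G.dist a u + G.dist b v) := by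
    have h1 := h4 a b u v
    have h2 := h4 a u b v
    have h3 := h4 a v b u
    omega
  clear hc h4 htri htr hD hediam hne huv
  rcases Q0 with ⟨e0, f0⟩ | ⟨e0, f0⟩ | ⟨e0, f0⟩ <;>
    rcases Q1 with ⟨e1, f1⟩ | ⟨e1, f1⟩ | ⟨e1, f1⟩ <;>
    rcases Q2 with ⟨e2, f2⟩ | ⟨e2, f2⟩ | ⟨e2, f2⟩ <;>
    omega
end

section
/- Let G be a connected block graph, i.e. a connected finite simple graph whose shortest-path metric d = d_G satisfies the 4-point condition: d(x,y) + d(z,t) ≤ max{d(x,z) + d(y,t), d(x,t) + d(y,z)} for all vertices x, y, z, t. If x, y ∈ V(G) satisfy d(x,y) = diam(G), then there exists a vertex z ∈ V(G) with d(z,x) + d(z,y) + d(x,y) = tr(G); that is, every diametral pair of vertices in a connected block graph can be extended to a triametral triple. -/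
/-- In a connected block graph (characterized by the 4-point condition on its
shortest-path metric), every diametral pair extends to a triametral triple. -/
theorem diametral_pair_extends_to_triametral_triple {V : Type*} [Fintype V]
    (G : SimpleGraph V) (hc : G.Connected)
    (h4 : ∀ x y z t : V,
      G.dist x y + G.dist z t ≤ max (G.dist x z + G.dist y t) (G.dist x t + G.dist y z))
    (x y : V) (hdiam : G.dist x y = G.diam) :
    ∃ z : V, G.dist z x + G.dist z y + G.dist x y = G.triameter := by
  classical
  haveI : Nonempty V := hc.nonempty
  have hediam : G.ediam ≠ ⊤ := by
    obtain ⟨u, v, huv⟩ := SimpleGraph.exists_edist_eq_ediam_of_finite (G := G)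
    rw [← huv]
    exact SimpleGraph.edist_ne_top_iff_reachable.mpr (hc u v)
  have hle : ∀ u v : V, G.dist u v ≤ G.dist x y := by
    intro u v; rw [hdiam]; exact G.dist_le_diam hediam
  obtain ⟨p, -, hp⟩ := Finset.exists_mem_eq_sup (Finset.univ : Finset (V × V × V))
    Finset.univ_nonempty
    (fun p : V × V × V => G.dist p.1 p.2.1 + G.dist p.1 p.2.2 + G.dist p.2.1 p.2.2)
  obtain ⟨a, b, c⟩ := p
  have htr : G.triameter = G.dist a b + G.dist a c + G.dist b c := hp
  have hub : ∀ z : V, G.dist z x + G.dist z y + G.dist x y ≤ G.triameter := fun z =>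
    Finset.le_sup (f := fun p : V × V × V =>
      G.dist p.1 p.2.1 + G.dist p.1 p.2.2 + G.dist p.2.1 p.2.2)
      (Finset.mem_univ (z, x, y))
  suffices h : ∃ z : V, G.dist a b + G.dist a c + G.dist b c ≤
      G.dist z x + G.dist z y + G.dist x y by
    obtain ⟨z, hz⟩ := h
    exact ⟨z, le_antisymm (hub z) (htr ▸ hz)⟩
  have h1 := h4 x y a b
  have h2 := h4 x y a c
  have h3 := h4 x y b c
  have e1 := G.dist_comm (u := a) (v := x)
  have e2 := G.dist_comm (u := a) (v := y)
  have e3 := G.dist_comm (u := b) (v := x)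
  have e4 := G.dist_comm (u := b) (v := y)
  have e5 := G.dist_comm (u := c) (v := x)
  have e6 := G.dist_comm (u := c) (v := y)
  have b1 := hle x a
  have b2 := hle x b
  have b3 := hle x c
  have b4 := hle y a
  have b5 := hle y b
  have b6 := hle y c
  have b7 := hle a b
  have b8 := hle a c
  have b9 := hle b c
  rcases le_max_iff.mp h1 with h1 | h1 <;> rcases le_max_iff.mp h2 with h2 | h2 <;>
    rcases le_max_iff.mp h3 with h3 | h3
  · exact ⟨b, by omega⟩
  · exact ⟨c, by omega⟩
  · exact ⟨a, by omega⟩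
  · exact ⟨a, by omega⟩
  · exact ⟨a, by omega⟩
  · exact ⟨a, by omega⟩
  · exact ⟨c, by omega⟩
  · exact ⟨b, by omega⟩
end

section
/- For any antipodal graph G (a connected finite simple graph such that for every vertex u there exists a vertex u' with [u,u']_G = V(G)), it holds that tr(G) = 2·diam(G). -/
/-- The metric interval `[u,v]_G` between vertices `u` and `v`. -/
def SimpleGraph.interval {V : Type*} (G : SimpleGraph V) (u v : V) : Set V :=
  {x : V | G.dist u x + G.dist x v = G.dist u v}

/-- A connected graph is antipodal if every vertex `u` has a vertex `u'` with
`[u,u']_G = V(G)`. -/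
def SimpleGraph.IsAntipodal {V : Type*} (G : SimpleGraph V) : Prop :=
  G.Connected ∧ ∀ u : V, ∃ u' : V, G.interval u u' = Set.univ

/-- For any antipodal graph `G` it holds that `tr(G) = 2·diam(G)`. -/
theorem triameter_eq_two_mul_diam_of_antipodal {V : Type*} [Fintype V]
    (G : SimpleGraph V) (hG : G.IsAntipodal) :
    G.triameter = 2 * G.diam := by
  obtain ⟨hconn, hanti⟩ := hG
  have hne : Nonempty V := hconn.nonempty
  have hediam : G.ediam ≠ ⊤ := by
    obtain ⟨p, hp⟩ := Finite.exists_max (fun p : V × V => G.edist p.1 p.2)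
    have hle : G.ediam ≤ G.edist p.1 p.2 := by
      rw [SimpleGraph.ediam_def]; exact iSup_le hp
    exact fun h => (SimpleGraph.edist_ne_top_iff_reachable.2 (hconn p.1 p.2))
      (top_le_iff.1 (h ▸ hle))
  apply le_antisymm
  · apply Finset.sup_le
    rintro ⟨a, b, c⟩ -
    dsimp only
    obtain ⟨a', ha'⟩ := hanti a
    have key : ∀ x, G.dist a x + G.dist x a' = G.dist a a' := fun x =>
      Set.eq_univ_iff_forall.1 ha' x
    have hbc : G.dist b c ≤ G.dist b a' + G.dist a' c := hconn.dist_triangle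
    have h1 := key b
    have h2 := key c
    have hd : G.dist a a' ≤ G.diam := SimpleGraph.dist_le_diam hediam
    have : G.dist a b + G.dist a c + G.dist b c ≤ 2 * G.dist a a' := by
      have : G.dist a' c = G.dist c a' := SimpleGraph.dist_comm ..
      omega
    omega
  · obtain ⟨u, v, huv⟩ := G.exists_dist_eq_diam
    have : G.dist u v + G.dist u v + G.dist v v ≤ G.triameter :=
      Finset.le_sup (f := fun p : V × V × V =>
        G.dist p.1 p.2.1 + G.dist p.1 p.2.2 + G.dist p.2.1 p.2.2)
        (Finset.mem_univ (u, v, v))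
    rw [SimpleGraph.dist_self] at this
    omega
end

section
/- For every positive integer n, the triameter of the n-dimensional hypercube graph Q_n equals 2n, i.e. tr(Q_n) = 2n. -/
/-- The `n`-cube `Q_n`: vertices are `{0,1}^n`, two vertices are adjacent iff
they differ in exactly one coordinate. -/
def cubeGraph (n : ℕ) : SimpleGraph (Fin n → Bool) where
  Adj x y := ∃! i : Fin n, x i ≠ y i
  symm := by
    constructor
    rintro x y ⟨i, hi, hu⟩
    exact ⟨i, hi.symm, fun j hj => hu j hj.symm⟩
  loopless := by
    constructor
    rintro x ⟨i, hi, -⟩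
    exact hi rfl

open Finset

namespace SimpleGraph

variable {V : Type*} [Fintype V] (G : SimpleGraph V)

theorem triameter_le_iff {k : ℕ} :
    G.triameter ≤ k ↔ ∀ a b c, G.dist a b + G.dist a c + G.dist b c ≤ k := by
  simp [triameter, Prod.forall]

theorem dist_add_dist_add_dist_le_triameter (a b c : V) :
    G.dist a b + G.dist a c + G.dist b c ≤ G.triameter :=
  (G.triameter_le_iff.1 le_rfl) a b c

end SimpleGraph

section Hamming

variable {ι : Type*} [Fintype ι]

theorem hammingDist_update_add_one [DecidableEq ι] {β : ι → Type*} [∀ i, DecidableEq (β i)]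
    {x y : ∀ i, β i} {i : ι} (h : x i ≠ y i) :
    hammingDist (Function.update x i (y i)) y + 1 = hammingDist x y := by
  have hfilter : ({j | Function.update x i (y i) j ≠ y j} : Finset ι) =
      ({j | x j ≠ y j} : Finset ι).erase i := by
    ext j
    by_cases hj : j = i
    · subst hj; simp
    · simp [hj]
  rw [hammingDist, hfilter, card_erase_add_one (by simpa using h), hammingDist]

theorem hammingDist_eq_card_of_forall_ne {β : ι → Type*} [∀ i, DecidableEq (β i)]
    {x y : ∀ i, β i} (h : ∀ i, x i ≠ y i) : hammingDist x y = Fintype.card ι := by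
  simp [hammingDist, h]

theorem hammingDist_add_hammingDist_add_hammingDist_le (a b c : ι → Bool) :
    hammingDist a b + hammingDist a c + hammingDist b c ≤ 2 * Fintype.card ι := by
  simp only [hammingDist, card_filter, ← sum_add_distrib]
  calc _ ≤ ∑ _i : ι, 2 := sum_le_sum fun i _ => by
        cases a i <;> cases b i <;> cases c i <;> decide
    _ = 2 * Fintype.card ι := by rw [sum_const, card_univ, smul_eq_mul, mul_comm]

end Hamming

namespace cubeGraph

variable {n : ℕ}

theorem adj_iff_hammingDist_eq_one {x y : Fin n → Bool} :
    (cubeGraph n).Adj x y ↔ hammingDist x y = 1 := by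
  simp [cubeGraph, hammingDist, card_eq_one_iff_existsUnique]

theorem adj_update {x : Fin n → Bool} {i : Fin n} {b : Bool} (h : x i ≠ b) :
    (cubeGraph n).Adj x (Function.update x i b) :=
  ⟨i, by simpa using h, fun j hj => by_contra fun hji => hj (Function.update_of_ne hji _ _).symm⟩

theorem hammingDist_le_length {x y : Fin n → Bool} (w : (cubeGraph n).Walk x y) :
    hammingDist x y ≤ w.length := by
  induction w with
  | nil => simp
  | @cons u v z h w ih =>
    calc hammingDist u z ≤ hammingDist u v + hammingDist v z := hammingDist_triangle _ _ _
      _ ≤ (SimpleGraph.Walk.cons h w).length := by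
        rw [adj_iff_hammingDist_eq_one.1 h, SimpleGraph.Walk.length_cons]
        omega

theorem exists_walk_length_eq_hammingDist (x y : Fin n → Bool) :
    ∃ w : (cubeGraph n).Walk x y, w.length = hammingDist x y := by
  induction h : hammingDist x y generalizing x with
  | zero =>
    obtain rfl := hammingDist_eq_zero.1 h
    exact ⟨.nil, rfl⟩
  | succ m ih =>
    obtain ⟨i, hi⟩ : ∃ i, x i ≠ y i := Function.ne_iff.1 (hammingDist_ne_zero.1 (by omega))
    have hcloser := hammingDist_update_add_one hi
    obtain ⟨w, hw⟩ := ih (Function.update x i (y i)) (by omega)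
    exact ⟨.cons (adj_update hi) w, by rw [SimpleGraph.Walk.length_cons, hw]⟩

theorem dist_eq_hammingDist (x y : Fin n → Bool) :
    (cubeGraph n).dist x y = hammingDist x y := by
  obtain ⟨w, hw⟩ := exists_walk_length_eq_hammingDist x y
  obtain ⟨p, hp⟩ := w.reachable.exists_walk_length_eq_dist
  exact le_antisymm (hw ▸ SimpleGraph.dist_le w) (hp ▸ hammingDist_le_length p)

end cubeGraph

theorem triameter_cube_general (n : ℕ) : (cubeGraph n).triameter = 2 * n := by
  refine le_antisymm ((cubeGraph n).triameter_le_iff.2 fun a b c => ?_) ?_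
  · simpa only [cubeGraph.dist_eq_hammingDist, Fintype.card_fin] using
      hammingDist_add_hammingDist_add_hammingDist_le a b c
  · have hfar : hammingDist (fun _ : Fin n => true) (fun _ => false) = n := by
      rw [hammingDist_eq_card_of_forall_ne fun _ => by decide, Fintype.card_fin]
    have := (cubeGraph n).dist_add_dist_add_dist_le_triameter
      (fun _ => false) (fun _ => true) (fun _ => false)
    rw [cubeGraph.dist_eq_hammingDist, cubeGraph.dist_eq_hammingDist,
      cubeGraph.dist_eq_hammingDist, hammingDist_self, hammingDist_comm, hfar] at this
    omega

/-- For every positive integer `n`, `tr(Q_n) = 2n`. -/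
theorem triameter_cube (n : ℕ) (hn : 1 ≤ n) : (cubeGraph n).triameter = 2 * n :=
  triameter_cube_general n
end

section
/- In an antipodal graph G, every pair of vertices can be extended to a triametral triple: for all u, v ∈ V(G) there exists w ∈ V(G) such that d_G(u,v) + d_G(u,w) + d_G(v,w) = tr(G). -/
/-- In an antipodal graph every pair of vertices extends to a triametral triple. -/
theorem pair_extends_to_triametral_triple_of_antipodal {V : Type*} [Fintype V]
    (G : SimpleGraph V) (hG : G.IsAntipodal) (u v : V) :
    ∃ w : V, G.dist u v + G.dist u w + G.dist v w = G.triameter := by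
  obtain ⟨hc, hant⟩ := hG
  have anti : ∀ a : V, ∃ a' : V, ∀ x : V, G.dist a x + G.dist x a' = G.dist a a' := by
    intro a
    obtain ⟨a', ha'⟩ := hant a
    exact ⟨a', fun x => (Set.eq_univ_iff_forall.mp ha' x : _)⟩
  obtain ⟨u', hu'⟩ := anti u
  -- every distance is at most d(u,u')
  have hle : ∀ x y : V, G.dist x y ≤ G.dist u u' := by
    intro x y
    have h1 : G.dist x y ≤ G.dist x u + G.dist u y := hc.dist_triangle
    have h2 : G.dist x y ≤ G.dist u' x + G.dist u' y := by
      have := SimpleGraph.dist_comm (G := G) (u := x) (v := u')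
      calc G.dist x y ≤ G.dist x u' + G.dist u' y := hc.dist_triangle
        _ = G.dist u' x + G.dist u' y := by rw [this]
    have hx := hu' x
    have hy := hu' y
    have c1 := SimpleGraph.dist_comm (G := G) (u := u') (v := x)
    have c2 := SimpleGraph.dist_comm (G := G) (u := u') (v := y)
    have c3 := SimpleGraph.dist_comm (G := G) (u := x) (v := u)
    omega
  refine ⟨u', ?_⟩
  have hsum : G.dist u v + G.dist u u' + G.dist v u' = 2 * G.dist u u' := by
    have := hu' v; omega
  have hge : G.dist u v + G.dist u u' + G.dist v u' ≤ G.triameter :=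
    Finset.le_sup (f := fun p : V × V × V =>
      G.dist p.1 p.2.1 + G.dist p.1 p.2.2 + G.dist p.2.1 p.2.2)
      (Finset.mem_univ (u, v, u'))
  have hle' : G.triameter ≤ 2 * G.dist u u' := by
    apply Finset.sup_le
    rintro ⟨a, b, c⟩ -
    obtain ⟨a', ha'⟩ := anti a
    have htri : G.dist b c ≤ G.dist b a' + G.dist a' c := hc.dist_triangle
    have hb := ha' b
    have hcc := ha' c
    have haa : G.dist a a' ≤ G.dist u u' := hle a a'
    simp only []
    have hca' := SimpleGraph.dist_comm (G := G) (u := a') (v := c)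
    omega
  omega
end
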